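/- arXiv:1208.4272 — 8 statements merged into one kernel-verified Lean document; each statement's English description precedes it below -/
import Mathlib

section
/- Let K be a compact metric space and let C(K) be the Banach space of continuous real-valued functions on K with the supremum norm. Let k ≥ 1 be an integer and let X and Y be Borel measurable C(K)-valued random variables on a probability space with E‖X‖^k < ∞ and E‖Y‖^k < ∞. Then the following are equivalent: (a) E α(X,…,X) = E α(Y,…,Y) for every bounded k-linear form α on C(K); (b) E(x₁*(X)⋯x_k*(X)) = E(x₁*(Y)⋯x_k*(Y)) for all continuous linear functionals x₁*,…,x_k* on C(K); (c) E(X(t₁)⋯X(t_k)) = E(Y(t₁)⋯Y(t_k)) for all points t₁,…,t_k ∈ K. -/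
/-!
The implications (a) ⇒ (b) ⇒ (c) specialise a `k`-linear form to a product of functionals, and
functionals to point evaluations. For (c) ⇒ (a), approximate the identity of `C(K)` by the
finite-rank contractions `f ↦ ∑ j, f (c j) • φ j` built from partitions of unity at scale
`1 / (n + 1)`. They converge strongly to the identity by uniform continuity, and a `k`-linear form
composed with one of them is a finite linear combination of the point moments `∏ i, f (t i)`, so
the two expectations agree for each `n`. Dominated convergence, with bound `‖α‖ * ‖X‖ ^ k`, passes
to the limit.
-/

open MeasureTheory Filter Metric Set
open scoped Topology

section Sampling

variable {K ι : Type*} [TopologicalSpace K] [Fintype ι]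

noncomputable def sampleCLM (c : ι → K) (φ : ι → C(K, ℝ)) : C(K, ℝ) →L[ℝ] C(K, ℝ) :=
  ∑ j, (ContinuousMap.evalCLM ℝ (c j)).smulRight (φ j)

theorem sampleCLM_apply (c : ι → K) (φ : ι → C(K, ℝ)) (f : C(K, ℝ)) :
    sampleCLM c φ f = ∑ j, f (c j) • φ j := by
  simp [sampleCLM]

theorem ContinuousMultilinearMap.apply_sampleCLM {κ : Type*} [Fintype κ] [DecidableEq κ]
    (α : ContinuousMultilinearMap ℝ (fun _ : κ => C(K, ℝ)) ℝ) (c : ι → K) (φ : ι → C(K, ℝ))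
    (f : C(K, ℝ)) :
    α (fun _ => sampleCLM c φ f) = ∑ r : κ → ι, (∏ i, f (c (r i))) * α (fun i => φ (r i)) := by
  simp_rw [sampleCLM_apply, α.map_sum, α.map_smul_univ, smul_eq_mul]

theorem PartitionOfUnity.sum_apply_eq_one (ρ : PartitionOfUnity ι K) (x : K) :
    ∑ j, ρ j x = 1 := by
  rw [← finsum_eq_sum_of_fintype]
  exact ρ.sum_eq_one (mem_univ x)

theorem PartitionOfUnity.abs_sampleCLM_apply_sub_le (ρ : PartitionOfUnity ι K) (c : ι → K)
    (f : C(K, ℝ)) (x : K) {a ε : ℝ} (h : ∀ j, ρ j x ≠ 0 → |f (c j) - a| ≤ ε) :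
    |sampleCLM c ρ f x - a| ≤ ε := by
  have hsum := ρ.sum_apply_eq_one x
  have hconv : sampleCLM c ρ f x - a = ∑ j, (f (c j) - a) * ρ j x := by
    simp only [sampleCLM_apply, ContinuousMap.coe_sum, ContinuousMap.coe_smul, Finset.sum_apply,
      Pi.smul_apply, smul_eq_mul, sub_mul, Finset.sum_sub_distrib, ← Finset.mul_sum, hsum, mul_one]
  calc |sampleCLM c ρ f x - a| ≤ ∑ j, |f (c j) - a| * ρ j x := by
        rw [hconv]
        refine (Finset.abs_sum_le_sum_abs _ _).trans_eq (Finset.sum_congr rfl fun j _ => ?_)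
        rw [abs_mul, abs_of_nonneg (ρ.nonneg j x)]
    _ ≤ ∑ j, ε * ρ j x := by
        refine Finset.sum_le_sum fun j _ => ?_
        rcases eq_or_ne (ρ j x) 0 with h0 | h0
        · simp [h0]
        · exact mul_le_mul_of_nonneg_right (h j h0) (ρ.nonneg j x)
    _ = ε := by rw [← Finset.mul_sum, hsum, mul_one]

variable [CompactSpace K]

theorem PartitionOfUnity.norm_sampleCLM_le (ρ : PartitionOfUnity ι K) (c : ι → K) :
    ‖sampleCLM c ρ‖ ≤ 1 := by
  refine ContinuousLinearMap.opNorm_le_bound _ zero_le_one fun f => ?_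
  rw [one_mul, ContinuousMap.norm_le _ (norm_nonneg f)]
  intro x
  simpa using ρ.abs_sampleCLM_apply_sub_le c f x (a := 0) fun j _ => by
    simpa using f.norm_coe_le_norm (c j)

end Sampling

section PseudoMetric

variable {K : Type*} [PseudoMetricSpace K] [CompactSpace K]

theorem PartitionOfUnity.dist_sampleCLM_apply_le {ι : Type*} [Fintype ι]
    (ρ : PartitionOfUnity ι K) {c : ι → K} {δ ε : ℝ} (hρ : ρ.IsSubordinate fun j => ball (c j) δ)
    (hε : 0 ≤ ε) {f : C(K, ℝ)} (hf : ∀ x y, dist x y < δ → dist (f x) (f y) ≤ ε) :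
    dist (sampleCLM c ρ f) f ≤ ε := by
  refine (ContinuousMap.dist_le hε).2 fun x => ?_
  refine ρ.abs_sampleCLM_apply_sub_le c f x fun j hj => ?_
  rw [← Real.dist_eq, dist_comm]
  exact hf x (c j) (hρ j (subset_tsupport _ hj))

theorem tendsto_sampleCLM_apply {ι : ℕ → Type*} [∀ n, Fintype (ι n)]
    {ρ : ∀ n, PartitionOfUnity (ι n) K} {c : ∀ n, ι n → K} {δ : ℕ → ℝ}
    (hδ : Tendsto δ atTop (𝓝 0)) (hρ : ∀ n, (ρ n).IsSubordinate fun j => ball (c n j) (δ n))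
    (f : C(K, ℝ)) : Tendsto (fun n => sampleCLM (c n) (ρ n) f) atTop (𝓝 f) := by
  refine Metric.tendsto_nhds.2 fun ε hε => ?_
  obtain ⟨η, hη, hf⟩ := Metric.uniformContinuous_iff.1
    (CompactSpace.uniformContinuous_of_continuous f.continuous) (ε / 2) (half_pos hε)
  filter_upwards [hδ.eventually (gt_mem_nhds hη)] with n hn
  refine ((ρ n).dist_sampleCLM_apply_le (hρ n) (half_pos hε).le fun x y hxy => ?_).trans_lt
    (half_lt_self hε)
  exact (hf (hxy.trans_le hn.le)).le

theorem exists_partitionOfUnity_isSubordinate_ball {ε : ℝ} (hε : 0 < ε) :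
    ∃ (s : Finset K) (ρ : PartitionOfUnity s K), ρ.IsSubordinate fun j => ball (j : K) ε := by
  obtain ⟨s, hs⟩ := isCompact_univ.elim_finite_subcover (fun x : K => ball x ε)
    (fun _ => isOpen_ball) fun x _ => mem_iUnion.2 ⟨x, mem_ball_self hε⟩
  refine ⟨s, PartitionOfUnity.exists_isSubordinate isClosed_univ _ (fun _ => isOpen_ball) ?_⟩
  simpa [Set.iUnion_subtype] using hs

end PseudoMetric

section Integral

variable {Ω E : Type*} [MeasurableSpace Ω] {μ : Measure Ω}
  [NormedAddCommGroup E] [NormedSpace ℝ E] [MeasurableSpace E] [OpensMeasurableSpace E]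
  {κ : Type*} [Fintype κ] {Z : Ω → E}

theorem integrable_prod_strongDual_apply (hZ : Measurable Z)
    (hZk : Integrable (fun ω => ‖Z ω‖ ^ Fintype.card κ) μ) (x : κ → StrongDual ℝ E) :
    Integrable (fun ω => ∏ i, x i (Z ω)) μ := by
  refine (hZk.const_mul (∏ i, ‖x i‖)).mono' ?_ (ae_of_all _ fun ω => ?_)
  · exact (Finset.measurable_prod _ fun i _ => (x i).continuous.measurable.comp hZ)
      |>.aestronglyMeasurable
  · calc ‖∏ i, x i (Z ω)‖ = ∏ i, ‖x i (Z ω)‖ := norm_prod _ _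
      _ ≤ ∏ i, ‖x i‖ * ‖Z ω‖ :=
          Finset.prod_le_prod (fun _ _ => norm_nonneg _) fun i _ => (x i).le_opNorm _
      _ = (∏ i, ‖x i‖) * ‖Z ω‖ ^ Fintype.card κ := by
          rw [Finset.prod_mul_distrib, Finset.prod_const, Finset.card_univ]

theorem ContinuousMultilinearMap.tendsto_integral_apply_const
    (α : ContinuousMultilinearMap ℝ (fun _ : κ => E) ℝ) {T : ℕ → E →L[ℝ] E}
    (hT : ∀ n, ‖T n‖ ≤ 1) (hlim : ∀ x, Tendsto (fun n => T n x) atTop (𝓝 x))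
    (hZ : Measurable Z) (hZk : Integrable (fun ω => ‖Z ω‖ ^ Fintype.card κ) μ) :
    Tendsto (fun n => ∫ ω, α (fun _ => T n (Z ω)) ∂μ) atTop (𝓝 (∫ ω, α (fun _ => Z ω) ∂μ)) := by
  have hα : Continuous fun x : E => α fun _ => x := α.cont.comp (continuous_pi fun _ => continuous_id)
  refine tendsto_integral_of_dominated_convergence (fun ω => ‖α‖ * ‖Z ω‖ ^ Fintype.card κ)
    (fun n => ((hα.comp (T n).continuous).measurable.comp hZ).aestronglyMeasurable)
    (hZk.const_mul _) (fun n => ae_of_all _ fun ω => ?_)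
    (ae_of_all _ fun ω => (hα.tendsto _).comp (hlim (Z ω)))
  calc ‖α fun _ => T n (Z ω)‖ ≤ ‖α‖ * ∏ _i : κ, ‖T n (Z ω)‖ := α.le_opNorm _
    _ ≤ ‖α‖ * ‖Z ω‖ ^ Fintype.card κ := by
        rw [Finset.prod_const, Finset.card_univ]
        gcongr
        simpa using (T n).le_of_opNorm_le (hT n) (Z ω)

end Integral

section ContinuousFunctions

variable {K Ω : Type*} [MeasurableSpace Ω] {μ : Measure Ω} {κ : Type*} [Fintype κ]

theorem integral_apply_sampleCLM [TopologicalSpace K] [CompactSpace K]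
    [MeasurableSpace C(K, ℝ)] [OpensMeasurableSpace C(K, ℝ)] {ι : Type*} [Fintype ι]
    [DecidableEq κ] (α : ContinuousMultilinearMap ℝ (fun _ : κ => C(K, ℝ)) ℝ) (c : ι → K) (φ : ι → C(K, ℝ))
    {Z : Ω → C(K, ℝ)} (hZ : Measurable Z) (hZk : Integrable (fun ω => ‖Z ω‖ ^ Fintype.card κ) μ) :
    ∫ ω, α (fun _ => sampleCLM c φ (Z ω)) ∂μ =
      ∑ r : κ → ι, (∫ ω, ∏ i, Z ω (c (r i)) ∂μ) * α (fun i => φ (r i)) := by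
  simp_rw [α.apply_sampleCLM]
  rw [integral_finsetSum _ fun r _ => ?_]
  · simp_rw [integral_mul_const]
  · simpa using (integrable_prod_strongDual_apply hZ hZk
      fun i => ContinuousMap.evalCLM ℝ (c (r i))).mul_const (α fun i => φ (r i))

theorem ContinuousMultilinearMap.integral_apply_const_eq_of_integral_prod_eval_eq
    [PseudoMetricSpace K] [CompactSpace K] [MeasurableSpace C(K, ℝ)] [OpensMeasurableSpace C(K, ℝ)]
    (α : ContinuousMultilinearMap ℝ (fun _ : κ => C(K, ℝ)) ℝ) {X Y : Ω → C(K, ℝ)}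
    (hX : Measurable X) (hY : Measurable Y)
    (hXk : Integrable (fun ω => ‖X ω‖ ^ Fintype.card κ) μ)
    (hYk : Integrable (fun ω => ‖Y ω‖ ^ Fintype.card κ) μ)
    (h : ∀ t : κ → K, ∫ ω, ∏ i, X ω (t i) ∂μ = ∫ ω, ∏ i, Y ω (t i) ∂μ) :
    ∫ ω, α (fun _ => X ω) ∂μ = ∫ ω, α (fun _ => Y ω) ∂μ := by
  classical
  choose s ρ hρ using fun n : ℕ =>
    exists_partitionOfUnity_isSubordinate_ball (K := K) (Nat.one_div_pos_of_nat (n := n))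
  have hlim := tendsto_sampleCLM_apply tendsto_one_div_add_atTop_nhds_zero_nat hρ
  have hT n := (ρ n).norm_sampleCLM_le (↑)
  refine tendsto_nhds_unique ((α.tendsto_integral_apply_const hT hlim hX hXk).congr fun n => ?_)
    (α.tendsto_integral_apply_const hT hlim hY hYk)
  simp only [integral_apply_sampleCLM α _ _ hX hXk, integral_apply_sampleCLM α _ _ hY hYk, h]

end ContinuousFunctions

theorem CK_moment_equality_tfae_general
    {K : Type*} [MetricSpace K] [CompactSpace K]
    [MeasurableSpace (ContinuousMap K ℝ)] [BorelSpace (ContinuousMap K ℝ)]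
    {Ω : Type*} [MeasurableSpace Ω] {μ : Measure Ω}
    {k : ℕ}
    {X Y : Ω → ContinuousMap K ℝ} (hX : Measurable X) (hY : Measurable Y)
    (hXk : Integrable (fun ω => ‖X ω‖ ^ k) μ)
    (hYk : Integrable (fun ω => ‖Y ω‖ ^ k) μ) :
    ((∀ α : ContinuousMultilinearMap ℝ (fun _ : Fin k => ContinuousMap K ℝ) ℝ,
        ∫ ω, α (fun _ => X ω) ∂μ = ∫ ω, α (fun _ => Y ω) ∂μ) ↔
      (∀ x : Fin k → StrongDual ℝ (ContinuousMap K ℝ),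
        ∫ ω, (∏ i, x i (X ω)) ∂μ = ∫ ω, (∏ i, x i (Y ω)) ∂μ)) ∧
    ((∀ x : Fin k → StrongDual ℝ (ContinuousMap K ℝ),
        ∫ ω, (∏ i, x i (X ω)) ∂μ = ∫ ω, (∏ i, x i (Y ω)) ∂μ) ↔
      (∀ t : Fin k → K,
        ∫ ω, (∏ i, X ω (t i)) ∂μ = ∫ ω, (∏ i, Y ω (t i)) ∂μ)) := by
  have hab : (∀ α : ContinuousMultilinearMap ℝ (fun _ : Fin k => C(K, ℝ)) ℝ,
        ∫ ω, α (fun _ => X ω) ∂μ = ∫ ω, α (fun _ => Y ω) ∂μ) →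
      ∀ x : Fin k → StrongDual ℝ C(K, ℝ),
        ∫ ω, ∏ i, x i (X ω) ∂μ = ∫ ω, ∏ i, x i (Y ω) ∂μ := fun ha x => by
    simpa using ha ((ContinuousMultilinearMap.mkPiAlgebra ℝ (Fin k) ℝ).compContinuousLinearMap x)
  have hbc : (∀ x : Fin k → StrongDual ℝ C(K, ℝ),
        ∫ ω, ∏ i, x i (X ω) ∂μ = ∫ ω, ∏ i, x i (Y ω) ∂μ) →
      ∀ t : Fin k → K, ∫ ω, ∏ i, X ω (t i) ∂μ = ∫ ω, ∏ i, Y ω (t i) ∂μ := fun hb t => by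
    simpa using hb fun i => ContinuousMap.evalCLM ℝ (t i)
  rw [← Fintype.card_fin k] at hXk hYk
  have hca := fun hc α =>
    ContinuousMultilinearMap.integral_apply_const_eq_of_integral_prod_eval_eq α hX hY hXk hYk hc
  exact ⟨⟨hab, fun hb => hca (hbc hb)⟩, ⟨hbc, fun hc => hab (hca hc)⟩⟩

/-- For Borel measurable random variables in `C(K)`, `K` compact metric,
with finite `k`-th moments of the norm, equality of the expectations of all bounded
`k`-linear forms, of all weak `k`-th moments, and of all pointwise joint `k`-th moments,
are equivalent. -/
theorem CK_moment_equality_tfae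
    {K : Type*} [MetricSpace K] [CompactSpace K]
    [MeasurableSpace (ContinuousMap K ℝ)] [BorelSpace (ContinuousMap K ℝ)]
    {Ω : Type*} [MeasurableSpace Ω] {μ : Measure Ω} [IsProbabilityMeasure μ]
    {k : ℕ} (hk : 1 ≤ k)
    {X Y : Ω → ContinuousMap K ℝ} (hX : Measurable X) (hY : Measurable Y)
    (hXk : Integrable (fun ω => ‖X ω‖ ^ k) μ)
    (hYk : Integrable (fun ω => ‖Y ω‖ ^ k) μ) :
    ((∀ α : ContinuousMultilinearMap ℝ (fun _ : Fin k => ContinuousMap K ℝ) ℝ,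
        ∫ ω, α (fun _ => X ω) ∂μ = ∫ ω, α (fun _ => Y ω) ∂μ) ↔
      (∀ x : Fin k → StrongDual ℝ (ContinuousMap K ℝ),
        ∫ ω, (∏ i, x i (X ω)) ∂μ = ∫ ω, (∏ i, x i (Y ω)) ∂μ)) ∧
    ((∀ x : Fin k → StrongDual ℝ (ContinuousMap K ℝ),
        ∫ ω, (∏ i, x i (X ω)) ∂μ = ∫ ω, (∏ i, x i (Y ω)) ∂μ) ↔
      (∀ t : Fin k → K,
        ∫ ω, (∏ i, X ω (t i)) ∂μ = ∫ ω, (∏ i, Y ω (t i)) ∂μ)) :=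
  CK_moment_equality_tfae_general hX hY hXk hYk
end

section
/- Let B be a real Banach space, let k ≥ 1 be an integer, and let X be a B-valued random variable on a probability space that is weakly measurable, i.e., ω ↦ x*(X(ω)) is measurable for every continuous linear functional x* ∈ B*. Then the following are equivalent: (i) for all x₁*,…,x_k* ∈ B*, the product x₁*(X)⋯x_k*(X) is integrable; (ii) E|x*(X)|^k < ∞ for every x* ∈ B*; (iii) sup{E|x*(X)|^k : x* ∈ B*, ‖x*‖ ≤ 1} < ∞. -/
open MeasureTheory
open scoped BigOperators ENNReal NNReal

open Filter

/-! For `k ≥ 1`, `x* ↦ ‖x*(X)‖_{L^k}` is a seminorm on `B*` (Minkowski), lower semicontinuous by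
Fatou's lemma, and real-valued under (ii). The dual `B*` is a Banach space, hence barrelled by
Baire's theorem, so this seminorm is continuous and therefore bounded on the unit ball: (ii) ⇒ (iii).
The converse is scaling, and (ii) ⇒ (i) is the generalized Hölder inequality with `k` exponents
equal to `k`. -/

lemma LowerSemicontinuous.ennreal_toReal {α : Type*} [TopologicalSpace α] {f : α → ℝ≥0∞}
    (hf : LowerSemicontinuous f) (h : ∀ x, f x ≠ ∞) :
    LowerSemicontinuous fun x => (f x).toReal := by
  rw [lowerSemicontinuous_iff_isClosed_preimage] at hf ⊢
  intro y
  rcases lt_or_ge y 0 with hy | hy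
  · convert isClosed_empty
    ext x
    simpa using hy.trans_le ENNReal.toReal_nonneg
  · convert hf (ENNReal.ofReal y) using 1
    ext x
    simp [ENNReal.le_ofReal_iff_toReal_le (h x) hy]

namespace MeasureTheory

variable {Ω F : Type*} [MeasurableSpace Ω] {μ : Measure Ω} [NormedAddCommGroup F]

lemma lintegral_nnnorm_pow_eq_eLpNorm_pow {k : ℕ} (hk : k ≠ 0) (f : Ω → F) :
    ∫⁻ ω, (‖f ω‖₊ : ℝ≥0∞) ^ k ∂μ = eLpNorm f k μ ^ k := by
  have := eLpNorm_nnreal_pow_eq_lintegral (μ := μ) (f := f) (p := (k : ℝ≥0)) (by simpa using hk)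
  simpa [ENNReal.rpow_natCast, enorm_eq_nnnorm] using this.symm

lemma memLp_iff_lintegral_nnnorm_pow_lt_top {k : ℕ} (hk : k ≠ 0) {f : Ω → F}
    (hf : AEStronglyMeasurable f μ) :
    MemLp f k μ ↔ ∫⁻ ω, (‖f ω‖₊ : ℝ≥0∞) ^ k ∂μ < ∞ := by
  rw [lintegral_nnnorm_pow_eq_eLpNorm_pow hk, ENNReal.pow_lt_top_iff, or_iff_left hk]
  exact and_iff_right hf

lemma lowerSemicontinuous_eLpNorm {E : Type*} [TopologicalSpace E] [SequentialSpace E]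
    {f : E → Ω → F} (hf : ∀ e, AEStronglyMeasurable (f e) μ)
    (hcont : ∀ ω, Continuous fun e => f e ω) (p : ℝ≥0∞) :
    LowerSemicontinuous fun e => eLpNorm (f e) p μ := by
  refine lowerSemicontinuous_iff_isClosed_preimage.2 fun c => IsSeqClosed.isClosed ?_
  intro e e₀ he hlim
  calc eLpNorm (f e₀) p μ ≤ liminf (fun n => eLpNorm (f (e n)) p μ) atTop :=
        Lp.eLpNorm_lim_le_liminf_eLpNorm (fun n => hf (e n)) _
          (ae_of_all _ fun ω => ((hcont ω).tendsto e₀).comp hlim)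
    _ ≤ c := liminf_le_of_frequently_le' (Frequently.of_forall he)

lemma integrable_prod_of_memLp {k : ℕ} (hk : k ≠ 0) {f : Fin k → Ω → ℝ}
    (hf : ∀ i, MemLp (f i) k μ) : Integrable (fun ω => ∏ i, f i ω) μ := by
  have := MemLp.prod' (s := Finset.univ) (fun i _ => hf i)
  rwa [Finset.sum_const, Finset.card_univ, Fintype.card_fin, nsmul_eq_mul,
    ENNReal.mul_inv_cancel (by simpa using hk) (by simp), inv_one, memLp_one_iff_integrable] at this

end MeasureTheory

section WeakMoments

variable {Ω B : Type*} [MeasurableSpace Ω] {μ : Measure Ω} [NormedAddCommGroup B]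
  [NormedSpace ℝ B] {X : Ω → B} {p : ℝ≥0∞}

noncomputable def weakLpSeminorm [Fact (1 ≤ p)]
    (hX : ∀ x : StrongDual ℝ B, MemLp (fun ω => x (X ω)) p μ) : Seminorm ℝ (StrongDual ℝ B) :=
  Seminorm.of (fun x => (eLpNorm (fun ω => x (X ω)) p μ).toReal)
    (fun x y => by
      rw [← ENNReal.toReal_add (hX x).2.ne (hX y).2.ne]
      exact ENNReal.toReal_mono (ENNReal.add_ne_top.2 ⟨(hX x).2.ne, (hX y).2.ne⟩)
        (eLpNorm_add_le (hX x).1 (hX y).1 Fact.out))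
    (fun c x => by
      change (eLpNorm (c • fun ω => x (X ω)) p μ).toReal = _
      rw [eLpNorm_const_smul, ENNReal.toReal_mul, toReal_enorm])

theorem exists_eLpNorm_apply_le_mul_enorm_of_memLp [Fact (1 ≤ p)]
    (hX : ∀ x : StrongDual ℝ B, MemLp (fun ω => x (X ω)) p μ) :
    ∃ C : ℝ≥0, ∀ x : StrongDual ℝ B, eLpNorm (fun ω => x (X ω)) p μ ≤ C * ‖x‖ₑ := by
  have hlsc : LowerSemicontinuous (weakLpSeminorm hX) :=
    (lowerSemicontinuous_eLpNorm (fun x => (hX x).1)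
      (fun ω => (ContinuousLinearMap.apply ℝ ℝ (X ω)).continuous) p).ennreal_toReal
      fun x => (hX x).2.ne
  obtain ⟨C, hC, hbound⟩ := Seminorm.bound_of_continuous_normedSpace _
    ((weakLpSeminorm hX).continuous_of_lowerSemicontinuous hlsc)
  refine ⟨C.toNNReal, fun x => ?_⟩
  calc eLpNorm (fun ω => x (X ω)) p μ = ENNReal.ofReal (weakLpSeminorm hX x) :=
        (ENNReal.ofReal_toReal (hX x).2.ne).symm
    _ ≤ ENNReal.ofReal (C * ‖x‖) := ENNReal.ofReal_le_ofReal (hbound x)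
    _ = C.toNNReal * ‖x‖ₑ := by rw [ENNReal.ofReal_mul hC.le, ofReal_norm]; rfl

lemma memLp_apply_of_forall_norm_le_one
    (h : ∀ x : StrongDual ℝ B, ‖x‖ ≤ 1 → MemLp (fun ω => x (X ω)) p μ) (x : StrongDual ℝ B) :
    MemLp (fun ω => x (X ω)) p μ := by
  have hpos : 0 < ‖x‖ + 1 := by positivity
  have hx : x = (‖x‖ + 1) • ((‖x‖ + 1)⁻¹ • x) := by
    rw [smul_smul, mul_inv_cancel₀ hpos.ne', one_smul]
  have hy : ‖(‖x‖ + 1)⁻¹ • x‖ ≤ 1 := by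
    rw [norm_smul, norm_inv, Real.norm_of_nonneg hpos.le, inv_mul_le_iff₀ hpos]; linarith
  rw [hx]
  exact (h _ hy).const_smul (‖x‖ + 1)

end WeakMoments

theorem weak_kth_moment_exists_iff_general
    {B : Type*} [NormedAddCommGroup B] [NormedSpace ℝ B]
    {Ω : Type*} [MeasurableSpace Ω] {μ : Measure Ω}
    {k : ℕ} (hk : 1 ≤ k) {X : Ω → B}
    (hw : ∀ x : StrongDual ℝ B, Measurable fun ω => x (X ω)) :
    ((∀ x : Fin k → StrongDual ℝ B,
        Integrable (fun ω => ∏ i, x i (X ω)) μ) ↔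
      (∀ x : StrongDual ℝ B,
        ∫⁻ ω, (‖x (X ω)‖₊ : ℝ≥0∞) ^ k ∂μ < ⊤)) ∧
    ((∀ x : StrongDual ℝ B,
        ∫⁻ ω, (‖x (X ω)‖₊ : ℝ≥0∞) ^ k ∂μ < ⊤) ↔
      (∃ C : ℝ≥0∞, C ≠ ⊤ ∧ ∀ x : StrongDual ℝ B, ‖x‖ ≤ 1 →
        ∫⁻ ω, (‖x (X ω)‖₊ : ℝ≥0∞) ^ k ∂μ ≤ C)) := by
  have hk0 : k ≠ 0 := by omega
  have : Fact (1 ≤ (k : ℝ≥0∞)) := ⟨by exact_mod_cast hk⟩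
  have hmemLp (x : StrongDual ℝ B) :
      MemLp (fun ω => x (X ω)) k μ ↔ ∫⁻ ω, (‖x (X ω)‖₊ : ℝ≥0∞) ^ k ∂μ < ⊤ :=
    memLp_iff_lintegral_nnnorm_pow_lt_top hk0 (hw x).aestronglyMeasurable
  simp_rw [← hmemLp]
  refine ⟨⟨fun h x => ?_, fun h x => integrable_prod_of_memLp hk0 fun i => h (x i)⟩,
    ⟨fun h => ?_, fun ⟨C, hC, hball⟩ => memLp_apply_of_forall_norm_le_one fun x hx => ?_⟩⟩
  · simpa [hmemLp, HasFiniteIntegral, enorm_eq_nnnorm, nnnorm_pow] using (h fun _ => x).2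
  · obtain ⟨C, hC⟩ := exists_eLpNorm_apply_le_mul_enorm_of_memLp h
    refine ⟨(C : ℝ≥0∞) ^ k, by simp, fun x hx => ?_⟩
    calc ∫⁻ ω, (‖x (X ω)‖₊ : ℝ≥0∞) ^ k ∂μ = eLpNorm (fun ω => x (X ω)) k μ ^ k :=
          lintegral_nnnorm_pow_eq_eLpNorm_pow hk0 _
      _ ≤ (C * ‖x‖ₑ) ^ k := by gcongr; exact hC x
      _ ≤ (C : ℝ≥0∞) ^ k := by
          gcongr
          exact mul_le_of_le_one_right' (by simpa [← ofReal_norm] using ENNReal.ofReal_le_one.2 hx)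
  · exact (hmemLp x).2 ((hball x hx).trans_lt hC.lt_top)

/-- For a weakly measurable `B`-valued random variable `X`, the existence of
all weak `k`-th moments, the finiteness of `E|x*(X)|^k` for every `x* ∈ B*`, and the
finiteness of the supremum of `E|x*(X)|^k` over the unit ball of `B*`, are all equivalent. -/
theorem weak_kth_moment_exists_iff
    {B : Type*} [NormedAddCommGroup B] [NormedSpace ℝ B] [CompleteSpace B]
    {Ω : Type*} [MeasurableSpace Ω] {μ : Measure Ω} [IsProbabilityMeasure μ]
    {k : ℕ} (hk : 1 ≤ k) {X : Ω → B}
    (hw : ∀ x : StrongDual ℝ B, Measurable fun ω => x (X ω)) :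
    ((∀ x : Fin k → StrongDual ℝ B,
        Integrable (fun ω => ∏ i, x i (X ω)) μ) ↔
      (∀ x : StrongDual ℝ B,
        ∫⁻ ω, (‖x (X ω)‖₊ : ℝ≥0∞) ^ k ∂μ < ⊤)) ∧
    ((∀ x : StrongDual ℝ B,
        ∫⁻ ω, (‖x (X ω)‖₊ : ℝ≥0∞) ^ k ∂μ < ⊤) ↔
      (∃ C : ℝ≥0∞, C ≠ ⊤ ∧ ∀ x : StrongDual ℝ B, ‖x‖ ≤ 1 →
        ∫⁻ ω, (‖x (X ω)‖₊ : ℝ≥0∞) ^ k ∂μ ≤ C)) :=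
  weak_kth_moment_exists_iff_general hk hw
end

section
/- Let K be a compact metric space, let k ≥ 2 be an even integer, and let X be a Borel measurable random variable with values in C(K) such that sup{E|X(t)|² : t ∈ K} < ∞. Then the following are equivalent: (ii) for all t₁,…,t_k ∈ K the product X(t₁)⋯X(t_k) is integrable and the function (t₁,…,t_k) ↦ E(X(t₁)⋯X(t_k)) is continuous on K^k; (iii) for every t ∈ K the random variable X(t)^k is integrable and the function t ↦ E(X(t)^k) is continuous on K. -/
/-!
Restricting the joint moment function to the diagonal gives (ii) ⇒ (iii). Conversely, since `k`
is even, `|X(t₁)⋯X(tₖ)| ≤ ∑ᵢ X(tᵢ)^k`; along a sequence `t⁽ⁿ⁾ → t` these dominating functions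
converge pointwise and, by (iii), also in expectation, so Pratt's lemma (dominated convergence
with convergent dominating functions) yields continuity of the joint moments.
-/

open MeasureTheory
open scoped BigOperators ENNReal NNReal
open Filter Topology

section PrattLemma

variable {α : Type*} [MeasurableSpace α] {μ : Measure α}

/-- Truncated at `B`, the gap `b n - h n` is dominated by `B` and tends to `B`, so ordinary
dominated convergence gives `∫ min (b n - h n) B → ∫ B`, whence `∫ h n → 0`. -/
theorem tendsto_integral_zero_of_tendsto_integral_bound {h b : ℕ → α → ℝ} {B : α → ℝ}
    (h_meas : ∀ n, AEStronglyMeasurable (h n) μ)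
    (h_nonneg : ∀ n, ∀ᵐ a ∂μ, 0 ≤ h n a) (h_le : ∀ n, ∀ᵐ a ∂μ, h n a ≤ b n a)
    (b_integrable : ∀ n, Integrable (b n) μ) (B_integrable : Integrable B μ)
    (h_lim : ∀ᵐ a ∂μ, Tendsto (fun n => h n a) atTop (𝓝 0))
    (b_lim : ∀ᵐ a ∂μ, Tendsto (fun n => b n a) atTop (𝓝 (B a)))
    (h_integral : Tendsto (fun n => ∫ a, b n a ∂μ) atTop (𝓝 (∫ a, B a ∂μ))) :
    Tendsto (fun n => ∫ a, h n a ∂μ) atTop (𝓝 0) := by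
  have h_integrable n : Integrable (h n) μ :=
    (b_integrable n).mono' (h_meas n) <| by
      filter_upwards [h_nonneg n, h_le n] with a h0 hb
      rwa [Real.norm_of_nonneg h0]
  have gap_nonneg : ∀ᵐ a ∂μ, ∀ n, 0 ≤ b n a - h n a :=
    ae_all_iff.2 fun n => by filter_upwards [h_le n] with a hb using sub_nonneg.2 hb
  have B_nonneg : ∀ᵐ a ∂μ, 0 ≤ B a := by
    filter_upwards [ae_all_iff.2 h_nonneg, gap_nonneg, b_lim] with a h0 hgap hB
    exact ge_of_tendsto' hB fun n => (h0 n).trans (by linarith [hgap n])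
  set trunc : ℕ → α → ℝ := fun n a => min (b n a - h n a) (B a)
  have trunc_integrable n : Integrable (trunc n) μ :=
    ((b_integrable n).sub (h_integrable n)).inf B_integrable
  have trunc_lim : Tendsto (fun n => ∫ a, trunc n a ∂μ) atTop (𝓝 (∫ a, B a ∂μ)) := by
    refine tendsto_integral_of_dominated_convergence B
      (fun n => (trunc_integrable n).aestronglyMeasurable) B_integrable (fun n => ?_) ?_
    · filter_upwards [gap_nonneg, B_nonneg] with a hgap hB
      rw [Real.norm_of_nonneg (le_min (hgap n) hB)]
      exact min_le_right _ _
    · filter_upwards [h_lim, b_lim] with a hh hb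
      simpa using (hb.sub hh).min (tendsto_const_nhds (x := B a))
  have h_le_gap n : ∫ a, h n a ∂μ ≤ ∫ a, b n a ∂μ - ∫ a, trunc n a ∂μ := by
    rw [← integral_sub (b_integrable n) (trunc_integrable n)]
    refine integral_mono_ae (h_integrable n) ((b_integrable n).sub (trunc_integrable n)) ?_
    filter_upwards with a
    have : trunc n a ≤ b n a - h n a := min_le_left _ _
    linarith
  refine squeeze_zero (fun n => integral_nonneg_of_ae (h_nonneg n)) h_le_gap ?_
  simpa using h_integral.sub trunc_lim

variable {E : Type*} [NormedAddCommGroup E] [NormedSpace ℝ E]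

/-- Pratt's lemma. -/
theorem tendsto_integral_of_tendsto_integral_bound {F : ℕ → α → E} {f : α → E}
    {bound : ℕ → α → ℝ} {limBound : α → ℝ}
    (hF_meas : ∀ n, AEStronglyMeasurable (F n) μ)
    (h_bound : ∀ n, ∀ᵐ a ∂μ, ‖F n a‖ ≤ bound n a)
    (bound_integrable : ∀ n, Integrable (bound n) μ) (limBound_integrable : Integrable limBound μ)
    (h_lim : ∀ᵐ a ∂μ, Tendsto (fun n => F n a) atTop (𝓝 (f a)))
    (bound_lim : ∀ᵐ a ∂μ, Tendsto (fun n => bound n a) atTop (𝓝 (limBound a)))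
    (h_integral : Tendsto (fun n => ∫ a, bound n a ∂μ) atTop (𝓝 (∫ a, limBound a ∂μ))) :
    Tendsto (fun n => ∫ a, F n a ∂μ) atTop (𝓝 (∫ a, f a ∂μ)) := by
  have hf_meas : AEStronglyMeasurable f μ := aestronglyMeasurable_of_tendsto_ae atTop hF_meas h_lim
  have hf_le : ∀ᵐ a ∂μ, ‖f a‖ ≤ limBound a := by
    filter_upwards [ae_all_iff.2 h_bound, h_lim, bound_lim] with a hb hF hB
    exact le_of_tendsto_of_tendsto' hF.norm hB hb
  have hF_integrable n : Integrable (F n) μ := (bound_integrable n).mono' (hF_meas n) (h_bound n)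
  have hf_integrable : Integrable f μ := limBound_integrable.mono' hf_meas hf_le
  have dist_lim : Tendsto (fun n => ∫ a, ‖F n a - f a‖ ∂μ) atTop (𝓝 0) := by
    refine tendsto_integral_zero_of_tendsto_integral_bound (b := fun n a => bound n a + limBound a)
      (B := fun a => limBound a + limBound a) (fun n => ((hF_meas n).sub hf_meas).norm)
      (fun n => Eventually.of_forall fun a => norm_nonneg _) (fun n => ?_)
      (fun n => (bound_integrable n).add limBound_integrable)
      (limBound_integrable.add limBound_integrable) ?_ ?_ ?_
    · filter_upwards [h_bound n, hf_le] with a hF hf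
      exact (norm_sub_le _ _).trans (add_le_add hF hf)
    · filter_upwards [h_lim] with a hF
      simpa using (hF.sub (tendsto_const_nhds (x := f a))).norm
    · filter_upwards [bound_lim] with a hB
      exact hB.add tendsto_const_nhds
    · simp_rw [integral_add (bound_integrable _) limBound_integrable,
        integral_add limBound_integrable limBound_integrable]
      exact h_integral.add tendsto_const_nhds
  rw [tendsto_iff_norm_sub_tendsto_zero]
  refine squeeze_zero (fun n => norm_nonneg _) (fun n => ?_) dist_lim
  rw [← integral_sub (hF_integrable n) hf_integrable]
  exact norm_integral_le_integral_norm _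

end PrattLemma

theorem abs_prod_le_sum_pow_card {ι : Type*} [Fintype ι] [Nonempty ι]
    (hι : Even (Fintype.card ι)) (x : ι → ℝ) :
    |∏ i, x i| ≤ ∑ i, x i ^ Fintype.card ι := by
  obtain ⟨j, hj⟩ := Finite.exists_max fun i => |x i|
  calc |∏ i, x i| = ∏ i, |x i| := Finset.abs_prod _ _
    _ ≤ ∏ _i : ι, |x j| := Finset.prod_le_prod (fun i _ => abs_nonneg _) fun i _ => hj i
    _ = x j ^ Fintype.card ι := by rw [Finset.prod_const, Finset.card_univ, hι.pow_abs]
    _ ≤ ∑ i, x i ^ Fintype.card ι :=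
        Finset.single_le_sum (fun i _ => hι.pow_nonneg (x i)) (Finset.mem_univ j)

section MixedMoments

variable {T Ω : Type*} [TopologicalSpace T] [MeasurableSpace Ω] {μ : Measure Ω} {k : ℕ}
  {X : Ω → C(T, ℝ)}

theorem integrable_prod_of_integrable_pow [NeZero k] (hke : Even k)
    (hX : ∀ t, AEStronglyMeasurable (fun ω => X ω t) μ)
    (hint : ∀ t, Integrable (fun ω => X ω t ^ k) μ) (t : Fin k → T) :
    Integrable (fun ω => ∏ i, X ω (t i)) μ := by
  refine (integrable_finsetSum Finset.univ fun i _ => hint (t i)).mono'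
    (Finset.aestronglyMeasurable_fun_prod Finset.univ fun i _ => hX (t i))
    (Eventually.of_forall fun ω => ?_)
  simpa only [Real.norm_eq_abs, Fintype.card_fin] using
    abs_prod_le_sum_pow_card (by simpa using hke) fun i => X ω (t i)

theorem continuous_integral_prod_of_continuous_integral_pow [FirstCountableTopology T]
    [NeZero k] (hke : Even k) (hX : ∀ t, AEStronglyMeasurable (fun ω => X ω t) μ)
    (hint : ∀ t, Integrable (fun ω => X ω t ^ k) μ)
    (hcont : Continuous fun t => ∫ ω, X ω t ^ k ∂μ) :
    Continuous fun t : Fin k → T => ∫ ω, ∏ i, X ω (t i) ∂μ := by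
  refine continuous_iff_seqContinuous.2 fun u t hu => ?_
  have hu_i i : Tendsto (fun n => u n i) atTop (𝓝 (t i)) := tendsto_pi_nhds.1 hu i
  have hsum_integrable (s : Fin k → T) : Integrable (fun ω => ∑ i, X ω (s i) ^ k) μ :=
    integrable_finsetSum _ fun i _ => hint (s i)
  have hsum_integral (s : Fin k → T) :
      ∫ ω, ∑ i, X ω (s i) ^ k ∂μ = ∑ i, ∫ ω, X ω (s i) ^ k ∂μ :=
    integral_finsetSum _ fun i _ => hint (s i)
  refine tendsto_integral_of_tendsto_integral_bound (F := fun n ω => ∏ i, X ω (u n i))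
    (fun n => (integrable_prod_of_integrable_pow hke hX hint (u n)).aestronglyMeasurable)
    (fun n => Eventually.of_forall fun ω => ?_) (fun n => hsum_integrable (u n))
    (hsum_integrable t) (Eventually.of_forall fun ω => ?_) (Eventually.of_forall fun ω => ?_) ?_
  · simpa only [Real.norm_eq_abs, Fintype.card_fin] using
      abs_prod_le_sum_pow_card (by simpa using hke) fun i => X ω (u n i)
  · exact tendsto_finsetProd _ fun i _ => ((X ω).continuous.tendsto (t i)).comp (hu_i i)
  · exact tendsto_finsetSum _ fun i _ =>
      (((X ω).continuous.tendsto (t i)).comp (hu_i i)).pow k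
  · simp_rw [hsum_integral]
    exact tendsto_finsetSum _ fun i _ => (hcont.tendsto (t i)).comp (hu_i i)

end MixedMoments

theorem CK_even_moment_function_continuous_iff_general
    {K : Type*} [MetricSpace K]
    [MeasurableSpace (ContinuousMap K ℝ)] [BorelSpace (ContinuousMap K ℝ)]
    {Ω : Type*} [MeasurableSpace Ω] {μ : Measure Ω}
    {k : ℕ} (hk2 : 2 ≤ k) (hke : Even k)
    {X : Ω → ContinuousMap K ℝ} (hX : Measurable X) :
    ((∀ t : Fin k → K, Integrable (fun ω => ∏ i, X ω (t i)) μ) ∧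
      Continuous fun t : Fin k → K => ∫ ω, (∏ i, X ω (t i)) ∂μ) ↔
    ((∀ t : K, Integrable (fun ω => (X ω t) ^ k) μ) ∧
      Continuous fun t : K => ∫ ω, (X ω t) ^ k ∂μ) := by
  have : NeZero k := ⟨by omega⟩
  have hX_eval t : AEStronglyMeasurable (fun ω => X ω t) μ :=
    ((continuous_eval_const t).measurable.comp hX).aestronglyMeasurable
  constructor
  · rintro ⟨hint, hcont⟩
    refine ⟨fun t => by simpa using hint fun _ => t, ?_⟩
    have hdiag : (fun t : K => ∫ ω, X ω t ^ k ∂μ)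
        = (fun s : Fin k → K => ∫ ω, ∏ i, X ω (s i) ∂μ) ∘ fun t _ => t := by
      funext t
      simp
    rw [hdiag]
    exact hcont.comp (continuous_pi fun _ => continuous_id)
  · rintro ⟨hint, hcont⟩
    exact ⟨integrable_prod_of_integrable_pow hke hX_eval hint,
      continuous_integral_prod_of_continuous_integral_pow hke hX_eval hint hcont⟩

/-- Let `K` be compact metric, `k ≥ 2` even, and `X` a Borel measurable
`C(K)`-valued random variable with `sup_t E|X(t)|² < ∞`. Then continuity (and integrability)
of the joint moment function `(t₁,…,t_k) ↦ E(X(t₁)⋯X(t_k))` on `K^k` is equivalent to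
continuity (and integrability) of `t ↦ E(X(t)^k)` on `K`. -/
theorem CK_even_moment_function_continuous_iff
    {K : Type*} [MetricSpace K] [CompactSpace K]
    [MeasurableSpace (ContinuousMap K ℝ)] [BorelSpace (ContinuousMap K ℝ)]
    {Ω : Type*} [MeasurableSpace Ω] {μ : Measure Ω} [IsProbabilityMeasure μ]
    {k : ℕ} (hk2 : 2 ≤ k) (hke : Even k)
    {X : Ω → ContinuousMap K ℝ} (hX : Measurable X)
    (hsup : ∃ C : ℝ≥0∞, C ≠ ⊤ ∧ ∀ t : K, ∫⁻ ω, (‖X ω t‖₊ : ℝ≥0∞) ^ 2 ∂μ ≤ C) :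
    ((∀ t : Fin k → K, Integrable (fun ω => ∏ i, X ω (t i)) μ) ∧
      Continuous fun t : Fin k → K => ∫ ω, (∏ i, X ω (t i)) ∂μ) ↔
    ((∀ t : K, Integrable (fun ω => (X ω t) ^ k) μ) ∧
      Continuous fun t : K => ∫ ω, (X ω t) ^ k ∂μ) :=
  CK_even_moment_function_continuous_iff_general hk2 hke hX
end

section
/- Let B be a separable real Banach space and let s > 0 be a real number; write m = ⌈s⌉ − 1 and γ = s − m, so 0 < γ ≤ 1. Let X and Y be Borel measurable B-valued random variables on a probability space with E‖X‖^s < ∞ and E‖Y‖^s < ∞. Let F_s be the set of functions f : B → ℝ that are m times continuously Fréchet differentiable and satisfy ‖f^{(m)}(x) − f^{(m)}(y)‖ ≤ ‖x − y‖^γ for all x, y ∈ B (so each f(X), f(Y) is integrable). Then the set of real numbers {|E f(X) − E f(Y)| : f ∈ F_s} is bounded above if and only if for every integer k with 1 ≤ k ≤ m and every bounded k-linear form α on B one has E α(X,…,X) = E α(Y,…,Y). -/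
/-!
A function `f` of the class differs from its Taylor polynomial of degree `m` at `0` by at most
`‖x‖ ^ s`: write the remainder in integral form with the `m`-th derivative and use the Hölder
bound on `D^m f (t • x) - D^m f 0`. The Taylor polynomial is a sum of diagonals of bounded
`k`-linear forms with `k ≤ m`, so when the moments agree, `E f(X) - E f(Y)` is the difference of
the expected remainders, hence at most `E‖X‖^s + E‖Y‖^s`. Conversely, the `m`-th derivative of
`x ↦ c • α (x, …, x)` is constant for a `k`-linear `α` with `k ≤ m`, so these functions lie in the
class for every real `c`, and `|c| * |E α(X, …, X) - E α(Y, …, Y)|` stays bounded only if the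
moments agree.
-/

open MeasureTheory Nat

namespace ContinuousMultilinearMap

variable {𝕜 : Type*} [NontriviallyNormedField 𝕜] {E G : Type*} [NormedAddCommGroup E]
  [NormedSpace 𝕜 E] [NormedAddCommGroup G] [NormedSpace 𝕜 G] {k : ℕ}

theorem contDiff_comp_diag (α : ContinuousMultilinearMap 𝕜 (fun _ : Fin k => E) G)
    {n : WithTop ℕ∞} : ContDiff 𝕜 n (fun x : E => α (fun _ => x)) :=
  α.contDiff.comp (contDiff_pi.mpr fun _ => contDiff_id)

theorem iteratedFDeriv_comp_diag_eq_zero (α : ContinuousMultilinearMap 𝕜 (fun _ : Fin k => E) G)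
    {n : ℕ} (hn : k < n) : iteratedFDeriv 𝕜 n (fun x : E => α (fun _ => x)) = 0 := by
  ext x v
  let diag : E →L[𝕜] (Fin k → E) := ContinuousLinearMap.pi fun _ => ContinuousLinearMap.id 𝕜 E
  have hα : iteratedFDeriv 𝕜 n α (diag x) = 0 := by
    simpa [Nat.descFactorial_eq_zero_iff_lt.mpr (by simpa using hn)] using
      α.norm_iteratedFDeriv_le n (diag x)
  have := diag.iteratedFDeriv_comp_right α.contDiff x (i := n) le_top
  simp_all [Function.comp_def, diag]

theorem iteratedFDeriv_comp_diag_eq [IsRCLikeNormedField 𝕜]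
    (α : ContinuousMultilinearMap 𝕜 (fun _ : Fin k => E) G) {n : ℕ} (hk : k ≤ n) (x y : E) :
    iteratedFDeriv 𝕜 n (fun x : E => α (fun _ => x)) x =
      iteratedFDeriv 𝕜 n (fun x : E => α (fun _ => x)) y := by
  refine is_const_of_fderiv_eq_zero (α.contDiff_comp_diag.differentiable_iteratedFDeriv
    (WithTop.coe_lt_top _)) (fun z => ?_) x y
  simp only [fderiv_iteratedFDeriv, α.iteratedFDeriv_comp_diag_eq_zero (Nat.lt_succ_of_le hk),
    Function.comp_apply, Pi.zero_apply]
  exact LinearIsometryEquiv.map_zero _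

end ContinuousMultilinearMap

section Taylor

variable {E F : Type*} [NormedAddCommGroup E] [NormedSpace ℝ E] [NormedAddCommGroup F]
  [NormedSpace ℝ F]

theorem norm_iteratedFDeriv_sub_apply_le_rpow {f : E → F} {m : ℕ} {s : ℝ} (hms : (m : ℝ) < s)
    (hH : ∀ x y, ‖iteratedFDeriv ℝ m f x - iteratedFDeriv ℝ m f y‖ ≤ ‖x - y‖ ^ (s - m))
    (a y : E) {t : ℝ} (ht : t ∈ Set.Icc (0 : ℝ) 1) :
    ‖(iteratedFDeriv ℝ m f (a + t • y) - iteratedFDeriv ℝ m f a) (fun _ => y)‖ ≤ ‖y‖ ^ s := by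
  have hty : ‖(a + t • y) - a‖ ≤ ‖y‖ := by
    rw [add_sub_cancel_left, norm_smul, Real.norm_of_nonneg ht.1]
    exact mul_le_of_le_one_left (norm_nonneg y) ht.2
  calc _ ≤ ‖iteratedFDeriv ℝ m f (a + t • y) - iteratedFDeriv ℝ m f a‖ * ‖y‖ ^ m :=
        ContinuousMultilinearMap.le_opNorm_mul_pow_of_le _ (pi_norm_le_iff_of_nonneg
          (norm_nonneg y) |>.mpr fun _ => le_rfl)
    _ ≤ ‖y‖ ^ (s - m) * ‖y‖ ^ m := by
        gcongr
        exact (hH _ _).trans (Real.rpow_le_rpow (norm_nonneg _) hty (by linarith))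
    _ = ‖y‖ ^ s := by
        rw [← Real.rpow_natCast, ← Real.rpow_add' (norm_nonneg y) (by linarith), sub_add_cancel]

theorem integral_one_sub_pow_smul [CompleteSpace F] (n : ℕ) (c : F) :
    ∫ t in (0 : ℝ)..1, (1 - t) ^ n • c = ((n : ℝ) + 1)⁻¹ • c := by
  rw [intervalIntegral.integral_smul_const, intervalIntegral.integral_comp_sub_left
    (fun t => t ^ n), integral_pow]
  norm_num

theorem norm_sub_taylor_le_of_holder [CompleteSpace F] {f : E → F} {m : ℕ} {s : ℝ}
    (hms : (m : ℝ) < s) (hf : ContDiff ℝ m f)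
    (hH : ∀ x y, ‖iteratedFDeriv ℝ m f x - iteratedFDeriv ℝ m f y‖ ≤ ‖x - y‖ ^ (s - m))
    (a y : E) :
    ‖f (a + y) - ∑ k ∈ Finset.range (m + 1), (k ! : ℝ)⁻¹ • iteratedFDeriv ℝ k f a (fun _ => y)‖
      ≤ ‖y‖ ^ s := by
  cases m with
  | zero =>
    simpa using norm_iteratedFDeriv_sub_apply_le_rpow hms hH a y (t := 1) (by simp)
  | succ n =>
    set D := iteratedFDeriv ℝ (n + 1) f
    have hcont : Continuous fun t : ℝ => (1 - t) ^ n • D (a + t • y) (fun _ => y) := by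
      have := hf.continuous_iteratedFDeriv le_rfl
      fun_prop
    have hlast : (((n + 1)! : ℕ) : ℝ)⁻¹ • D a (fun _ => y)
        = (n ! : ℝ)⁻¹ • ∫ t in (0 : ℝ)..1, (1 - t) ^ n • D a (fun _ => y) := by
      rw [integral_one_sub_pow_smul, smul_smul, Nat.factorial_succ, Nat.cast_mul, mul_inv,
        mul_comm]
      push_cast
      rfl
    have hrem : f (a + y) - ∑ k ∈ Finset.range (n + 2),
          (k ! : ℝ)⁻¹ • iteratedFDeriv ℝ k f a (fun _ => y) =
        (n ! : ℝ)⁻¹ • ∫ t in (0 : ℝ)..1, (1 - t) ^ n • (D (a + t • y) - D a) (fun _ => y) := by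
      rw [map_add_eq_sum_add_integral_iteratedFDeriv (fun t _ => hf.contDiffAt),
        Finset.sum_range_succ _ (n + 1), hlast, add_sub_add_left_eq_sub, ← smul_sub,
        ← intervalIntegral.integral_sub (hcont.intervalIntegrable _ _)
          ((by fun_prop : Continuous _).intervalIntegrable _ _)]
      simp_rw [sub_apply, smul_sub]
    have hint : ‖∫ t in (0 : ℝ)..1, (1 - t) ^ n • (D (a + t • y) - D a) (fun _ => y)‖
        ≤ ‖y‖ ^ s * |1 - 0| := by
      refine intervalIntegral.norm_integral_le_of_norm_le_const fun t ht => ?_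
      have ht : t ∈ Set.Icc (0 : ℝ) 1 := by
        rw [Set.uIoc_of_le zero_le_one] at ht
        exact Set.Ioc_subset_Icc_self ht
      rw [norm_smul, norm_pow, Real.norm_of_nonneg (sub_nonneg.2 ht.2)]
      exact (mul_le_of_le_one_left (norm_nonneg _) (pow_le_one₀ (sub_nonneg.2 ht.2)
        (by linarith [ht.1]))).trans (norm_iteratedFDeriv_sub_apply_le_rpow hms hH a y ht)
    have hfac : ‖(n ! : ℝ)⁻¹‖ ≤ 1 := by
      rw [norm_inv, Real.norm_natCast]
      exact inv_le_one_of_one_le₀ (by exact_mod_cast n.factorial_pos)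
    rw [hrem, norm_smul, ← one_mul (‖y‖ ^ s)]
    exact mul_le_mul hfac (hint.trans_eq (by norm_num)) (norm_nonneg _) zero_le_one

end Taylor

section Moments

variable {B : Type*} [NormedAddCommGroup B] [MeasurableSpace B] [BorelSpace B]
  {Ω : Type*} [MeasurableSpace Ω] {μ : Measure Ω} [IsFiniteMeasure μ] {s : ℝ}

theorem pow_le_one_add_rpow {c : ℝ} (hc : 0 ≤ c) {k : ℕ} (hk : (k : ℝ) ≤ s) :
    c ^ k ≤ 1 + c ^ s := by
  rcases le_or_gt c 1 with h | h
  · exact (pow_le_one₀ hc h).trans (le_add_of_nonneg_right (Real.rpow_nonneg hc s))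
  · rw [← Real.rpow_natCast]
    exact (Real.rpow_le_rpow_of_exponent_le h.le hk).trans (le_add_of_nonneg_left zero_le_one)

theorem integrable_comp_of_abs_le_one_add_rpow {g : B → ℝ} (hg : Continuous g) {C : ℝ}
    (hgC : ∀ x, |g x| ≤ C * (1 + ‖x‖ ^ s)) {Z : Ω → B} (hZ : Measurable Z)
    (hZs : Integrable (fun ω => ‖Z ω‖ ^ s) μ) : Integrable (fun ω => g (Z ω)) μ :=
  (((integrable_const 1).add hZs).const_mul C).mono' (hg.measurable.comp hZ).aestronglyMeasurable
    (ae_of_all _ fun ω => hgC (Z ω))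

variable [NormedSpace ℝ B]

theorem integrable_comp_diag {k : ℕ} (α : ContinuousMultilinearMap ℝ (fun _ : Fin k => B) ℝ)
    (hk : (k : ℝ) ≤ s) {Z : Ω → B} (hZ : Measurable Z)
    (hZs : Integrable (fun ω => ‖Z ω‖ ^ s) μ) : Integrable (fun ω => α (fun _ => Z ω)) μ := by
  refine integrable_comp_of_abs_le_one_add_rpow (g := fun x => α (fun _ => x)) (by fun_prop)
    (C := ‖α‖) (fun x => ?_) hZ hZs
  calc |α (fun _ => x)| ≤ ‖α‖ * ‖x‖ ^ k :=
        α.le_opNorm_mul_pow_of_le (pi_norm_le_iff_of_nonneg (norm_nonneg x) |>.mpr fun _ => le_rfl)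
    _ ≤ ‖α‖ * (1 + ‖x‖ ^ s) := by gcongr; exact pow_le_one_add_rpow (norm_nonneg x) hk

theorem integral_sum_comp_diag_eq {m : ℕ} (hms : (m : ℝ) ≤ s) {X Y : Ω → B}
    (hX : Measurable X) (hY : Measurable Y) (hXs : Integrable (fun ω => ‖X ω‖ ^ s) μ)
    (hYs : Integrable (fun ω => ‖Y ω‖ ^ s) μ)
    (hmom : ∀ k : ℕ, 1 ≤ k → k ≤ m → ∀ α : ContinuousMultilinearMap ℝ (fun _ : Fin k => B) ℝ,
      ∫ ω, α (fun _ => X ω) ∂μ = ∫ ω, α (fun _ => Y ω) ∂μ)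
    (α : (k : ℕ) → ContinuousMultilinearMap ℝ (fun _ : Fin k => B) ℝ) :
    ∫ ω, ∑ k ∈ Finset.range (m + 1), α k (fun _ => X ω) ∂μ
      = ∫ ω, ∑ k ∈ Finset.range (m + 1), α k (fun _ => Y ω) ∂μ := by
  have hks : ∀ k ∈ Finset.range (m + 1), (k : ℝ) ≤ s := fun k hk =>
    (Nat.cast_le.mpr (Finset.mem_range_succ_iff.mp hk)).trans hms
  rw [integral_finsetSum _ fun k hk => integrable_comp_diag (α k) (hks k hk) hX hXs,
    integral_finsetSum _ fun k hk => integrable_comp_diag (α k) (hks k hk) hY hYs]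
  refine Finset.sum_congr rfl fun k hk => ?_
  rcases k.eq_zero_or_pos with rfl | hk0
  · exact integral_congr_ae (ae_of_all _ fun ω => congrArg (α 0) (Subsingleton.elim _ _))
  · exact hmom k hk0 (Finset.mem_range_succ_iff.mp hk) (α k)

theorem abs_integral_sub_taylor_le {f : B → ℝ} {m : ℕ} (hms : (m : ℝ) < s) (hf : ContDiff ℝ m f)
    (hH : ∀ x y, ‖iteratedFDeriv ℝ m f x - iteratedFDeriv ℝ m f y‖ ≤ ‖x - y‖ ^ (s - m))
    {Z : Ω → B} (hZ : Measurable Z) (hZs : Integrable (fun ω => ‖Z ω‖ ^ s) μ) :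
    |∫ ω, f (Z ω) ∂μ - ∫ ω, ∑ k ∈ Finset.range (m + 1),
        ((k ! : ℝ)⁻¹ • iteratedFDeriv ℝ k f 0) (fun _ => Z ω) ∂μ| ≤ ∫ ω, ‖Z ω‖ ^ s ∂μ := by
  set P : B → ℝ := fun x => ∑ k ∈ Finset.range (m + 1),
    ((k ! : ℝ)⁻¹ • iteratedFDeriv ℝ k f 0) (fun _ => x)
  have hR : ∀ x, |f x - P x| ≤ ‖x‖ ^ s := fun x => by
    simpa [P] using norm_sub_taylor_le_of_holder hms hf hH 0 x
  have hP : Integrable (fun ω => P (Z ω)) μ :=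
    integrable_finsetSum _ fun k hk => integrable_comp_diag _
      ((Nat.cast_le.mpr (Finset.mem_range_succ_iff.mp hk)).trans hms.le) hZ hZs
  have hfP : Integrable (fun ω => f (Z ω) - P (Z ω)) μ :=
    integrable_comp_of_abs_le_one_add_rpow (g := fun x => f x - P x)
      (hf.continuous.sub (by fun_prop)) (C := 1)
      (fun x => by linarith [hR x, Real.rpow_nonneg (norm_nonneg x) s]) hZ hZs
  rw [← integral_sub (hfP.add hP |>.congr (ae_of_all _ fun ω => sub_add_cancel _ _)) hP,
    ← Real.norm_eq_abs]
  exact norm_integral_le_of_norm_le hZs (ae_of_all _ fun ω => hR (Z ω))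

end Moments

theorem eq_of_forall_abs_mul_sub_mul_le {a b M : ℝ} (h : ∀ c : ℝ, |c * a - c * b| ≤ M) :
    a = b := by
  by_contra hab
  have hne : a - b ≠ 0 := sub_ne_zero.mpr hab
  have := h ((|M| + 1) / (a - b))
  rw [← mul_sub, div_mul_cancel₀ _ hne, abs_of_pos (by positivity)] at this
  linarith [le_abs_self M]

theorem zolotarev_distance_finite_iff_equal_moments_general
    {B : Type*} [NormedAddCommGroup B] [NormedSpace ℝ B]
    [MeasurableSpace B] [BorelSpace B]
    {Ω : Type*} [MeasurableSpace Ω] {μ : Measure Ω} [IsProbabilityMeasure μ]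
    (s : ℝ) (m : ℕ) (hm₁ : (m : ℝ) < s)
    {X Y : Ω → B} (hX : Measurable X) (hY : Measurable Y)
    (hXs : Integrable (fun ω => ‖X ω‖ ^ s) μ)
    (hYs : Integrable (fun ω => ‖Y ω‖ ^ s) μ) :
    BddAbove {r : ℝ | ∃ f : B → ℝ,
        ContDiff ℝ m f ∧
        (∀ x y : B, ‖iteratedFDeriv ℝ m f x - iteratedFDeriv ℝ m f y‖
            ≤ ‖x - y‖ ^ (s - m)) ∧
        r = |∫ ω, f (X ω) ∂μ - ∫ ω, f (Y ω) ∂μ|} ↔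
    (∀ k : ℕ, 1 ≤ k → k ≤ m →
      ∀ α : ContinuousMultilinearMap ℝ (fun _ : Fin k => B) ℝ,
        ∫ ω, α (fun _ => X ω) ∂μ = ∫ ω, α (fun _ => Y ω) ∂μ) := by
  constructor
  · rintro ⟨M, hM⟩ k - hkm α
    refine eq_of_forall_abs_mul_sub_mul_le fun c => hM ⟨fun x => (c • α) (fun _ => x),
      (c • α).contDiff_comp_diag, fun x y => ?_, ?_⟩
    · rw [(c • α).iteratedFDeriv_comp_diag_eq hkm x y, sub_self, norm_zero]
      positivity
    · simp only [smul_apply, smul_eq_mul, integral_const_mul]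
  · intro hmom
    refine ⟨∫ ω, ‖X ω‖ ^ s ∂μ + ∫ ω, ‖Y ω‖ ^ s ∂μ, ?_⟩
    rintro r ⟨f, hf, hH, rfl⟩
    have hTX := abs_integral_sub_taylor_le hm₁ hf hH hX hXs
    have hTY := abs_integral_sub_taylor_le hm₁ hf hH hY hYs
    rw [integral_sum_comp_diag_eq hm₁.le hX hY hXs hYs hmom] at hTX
    exact (abs_sub_le _ _ _).trans (add_le_add hTX (by rwa [abs_sub_comm]))

/-- Let `B` be a separable Banach space, `s > 0`, `m = ⌈s⌉ - 1` (so
`m < s ≤ m + 1`), and let `X`, `Y` be Borel measurable `B`-valued random variables with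
`E‖X‖^s, E‖Y‖^s < ∞`.  The Zolotarev distance `ζ_s(X,Y)` is finite (i.e. the set of values
`|E f(X) - E f(Y)|` over the class `F_s` is bounded above) if and only if
`E α(X,…,X) = E α(Y,…,Y)` for every bounded `k`-linear form `α` with `1 ≤ k ≤ m`. -/
theorem zolotarev_distance_finite_iff_equal_moments
    {B : Type*} [NormedAddCommGroup B] [NormedSpace ℝ B] [CompleteSpace B]
    [TopologicalSpace.SeparableSpace B] [MeasurableSpace B] [BorelSpace B]
    {Ω : Type*} [MeasurableSpace Ω] {μ : Measure Ω} [IsProbabilityMeasure μ]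
    (s : ℝ) (hs : 0 < s) (m : ℕ) (hm₁ : (m : ℝ) < s) (hm₂ : s ≤ m + 1)
    {X Y : Ω → B} (hX : Measurable X) (hY : Measurable Y)
    (hXs : Integrable (fun ω => ‖X ω‖ ^ s) μ)
    (hYs : Integrable (fun ω => ‖Y ω‖ ^ s) μ) :
    BddAbove {r : ℝ | ∃ f : B → ℝ,
        ContDiff ℝ m f ∧
        (∀ x y : B, ‖iteratedFDeriv ℝ m f x - iteratedFDeriv ℝ m f y‖
            ≤ ‖x - y‖ ^ (s - m)) ∧
        r = |∫ ω, f (X ω) ∂μ - ∫ ω, f (Y ω) ∂μ|} ↔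
    (∀ k : ℕ, 1 ≤ k → k ≤ m →
      ∀ α : ContinuousMultilinearMap ℝ (fun _ : Fin k => B) ℝ,
        ∫ ω, α (fun _ => X ω) ∂μ = ∫ ω, α (fun _ => Y ω) ∂μ) :=
  zolotarev_distance_finite_iff_equal_moments_general s m hm₁ hX hY hXs hYs
end

section
/- Let S be an arbitrary set (regarded as a discrete topological space), let k ≥ 1 be an integer, and let α be a bounded k-linear form on c₀(S), the Banach space of real-valued functions on S vanishing at infinity with the supremum norm. Then there exists a countable subset A ⊆ S such that α(f₁,…,f_k) = α(g₁,…,g_k) whenever f₁,…,f_k, g₁,…,g_k ∈ c₀(S) satisfy fᵢ(s) = gᵢ(s) for every i ∈ {1,…,k} and every s ∈ A. -/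
/-!
Write `c m = α (e_{m 1}, …, e_{m k})` for the values of `α` on unit vectors. Averaging
`α (∑ₛ ε₁ₛ eₛ, …, ∑ₛ εₖₛ eₛ) ^ 2` over all independent signs `εᵢₛ = ±1`, `s ∈ F`, the cross terms
cancel and the test vectors have norm `1`, so `∑_{m ∈ Fᵏ} (c m) ^ 2 ≤ ‖α‖ ^ 2` for every finite `F`.
Hence `c` is square summable and vanishes off a countable set of multi-indices; let `A` collect
their coordinates. The forms `α (f₁, …, fₖ)` and `α (1_A f₁, …, 1_A fₖ)` agree on tuples of unit
vectors, hence on finitely supported tuples by multilinearity, hence everywhere by density and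
continuity.
-/

open scoped ZeroAtInfty

section SignAveraging

variable {ι κ : Type*} [Fintype ι] [DecidableEq ι] [Fintype κ] [DecidableEq κ]

theorem sum_sign_mul_sign (a b : κ) :
    ∑ e : κ → ℤˣ, ((e a : ℤ) : ℝ) * (e b : ℤ) =
      if a = b then (Fintype.card (κ → ℤˣ) : ℝ) else 0 := by
  split_ifs with hab
  · subst hab
    simp [← Int.cast_mul, ← Units.val_mul, Int.units_mul_self]
  · set term : (κ → ℤˣ) → ℝ := fun e => ((e a : ℤ) : ℝ) * (e b : ℤ)
    have hflip : ∀ e, term (e * Pi.mulSingle a (-1)) = -term e := fun e => by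
      simp [term, Ne.symm hab]
    have := Equiv.sum_comp (Equiv.mulRight (Pi.mulSingle a (-1) : κ → ℤˣ)) term
    simp only [Equiv.coe_mulRight, hflip, Finset.sum_neg_distrib] at this
    linarith

theorem sum_prod_sign_mul_prod_sign (m m' : ι → κ) :
    ∑ ε : ι → κ → ℤˣ, (∏ i, ((ε i (m i) : ℤ) : ℝ)) * ∏ i, ((ε i (m' i) : ℤ) : ℝ) =
      if m = m' then (Fintype.card (ι → κ → ℤˣ) : ℝ) else 0 := by
  simp_rw [← Finset.prod_mul_distrib, ← Fintype.prod_sum (fun i (e : κ → ℤˣ) =>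
    ((e (m i) : ℤ) : ℝ) * (e (m' i) : ℤ)), sum_sign_mul_sign, Finset.prod_ite_zero, funext_iff,
    Fintype.card_fun, Nat.cast_pow, Finset.prod_const, Finset.card_univ, Finset.mem_univ,
    true_implies]

theorem sum_sq_sum_prod_sign_mul (c : (ι → κ) → ℝ) :
    ∑ ε : ι → κ → ℤˣ, (∑ m : ι → κ, (∏ i, ((ε i (m i) : ℤ) : ℝ)) * c m) ^ 2 =
      Fintype.card (ι → κ → ℤˣ) * ∑ m, c m ^ 2 := by
  calc _ = ∑ m, ∑ m', c m * c m' *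
        ∑ ε : ι → κ → ℤˣ, (∏ i, ((ε i (m i) : ℤ) : ℝ)) * ∏ i, ((ε i (m' i) : ℤ) : ℝ) := by
        simp_rw [sq, Finset.sum_mul_sum, Finset.mul_sum]
        rw [Finset.sum_comm]
        refine Finset.sum_congr rfl fun m _ => ?_
        rw [Finset.sum_comm]
        refine Finset.sum_congr rfl fun m' _ => Finset.sum_congr rfl fun ε _ => ?_
        ring
    _ = _ := by
        simp_rw [sum_prod_sign_mul_prod_sign, mul_ite, mul_zero, Finset.sum_ite_eq,
          Finset.mem_univ, if_true, Finset.mul_sum]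
        exact Finset.sum_congr rfl fun m _ => by ring

theorem ContinuousMultilinearMap.sum_sq_apply_le_sq_opNorm {E : Type*} [SeminormedAddCommGroup E]
    [NormedSpace ℝ E] (β : ContinuousMultilinearMap ℝ (fun _ : ι => E) ℝ) (x : κ → E)
    (hx : ∀ e : κ → ℤˣ, ‖∑ j, ((e j : ℤ) : ℝ) • x j‖ ≤ 1) :
    ∑ m : ι → κ, β (fun i => x (m i)) ^ 2 ≤ ‖β‖ ^ 2 := by
  have hexpand : ∀ ε : ι → κ → ℤˣ, β (fun i => ∑ j, ((ε i j : ℤ) : ℝ) • x j) =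
      ∑ m : ι → κ, (∏ i, ((ε i (m i) : ℤ) : ℝ)) * β (fun i => x (m i)) := fun ε => by
    simp [β.map_sum, β.map_smul_univ]
  have hbound : ∀ ε : ι → κ → ℤˣ, β (fun i => ∑ j, ((ε i j : ℤ) : ℝ) • x j) ^ 2 ≤ ‖β‖ ^ 2 :=
    fun ε => by
      have := β.le_opNorm_mul_prod_of_le (b := 1) fun i => hx (ε i)
      rw [← sq_abs, ← Real.norm_eq_abs]
      gcongr
      simpa using this
  have hN : (0 : ℝ) < Fintype.card (ι → κ → ℤˣ) := by exact_mod_cast Fintype.card_pos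
  refine le_of_mul_le_mul_left ?_ hN
  calc _ = ∑ ε : ι → κ → ℤˣ, β (fun i => ∑ j, ((ε i j : ℤ) : ℝ) • x j) ^ 2 := by
        simp_rw [hexpand, sum_sq_sum_prod_sign_mul]
    _ ≤ ∑ _ε : ι → κ → ℤˣ, ‖β‖ ^ 2 := Finset.sum_le_sum fun ε _ => hbound ε
    _ = _ := by simp

end SignAveraging

theorem ContinuousMultilinearMap.ext_of_denseRange {R ι V E F : Type*} [Semiring R]
    [AddCommMonoid E] [Module R E] [TopologicalSpace E] [AddCommMonoid F] [Module R F]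
    [TopologicalSpace F] [T2Space F] {β γ : ContinuousMultilinearMap R (fun _ : ι => E) F}
    {L : V → E} (hL : DenseRange L)
    (h : ∀ v : ι → V, β (fun i => L (v i)) = γ (fun i => L (v i))) : β = γ :=
  DFunLike.coe_injective <| β.cont.ext_on (DenseRange.piMap fun _ => hL) γ.cont <| by
    rintro _ ⟨v, rfl⟩
    exact h v

namespace ZeroAtInftyContinuousMap

open Filter

theorem norm_le {α β : Type*} [TopologicalSpace α] [SeminormedAddCommGroup β] {f : C₀(α, β)}
    {C : ℝ} (hC : 0 ≤ C) : ‖f‖ ≤ C ↔ ∀ x, ‖f x‖ ≤ C := by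
  rw [← norm_toBCF_eq_norm]
  exact BoundedContinuousFunction.norm_le hC

theorem norm_apply_le {α β : Type*} [TopologicalSpace α] [SeminormedAddCommGroup β]
    (f : C₀(α, β)) (x : α) : ‖f x‖ ≤ ‖f‖ :=
  (norm_le (norm_nonneg f)).1 le_rfl x

variable {S : Type*} [TopologicalSpace S] [DiscreteTopology S]

theorem finite_setOf_le_norm (f : C₀(S, ℝ)) {δ : ℝ} (hδ : 0 < δ) :
    {s | δ ≤ ‖f s‖}.Finite := by
  have hf := zero_at_infty f
  rw [cocompact_eq_cofinite] at hf
  simpa [eventually_cofinite] using hf.eventually (eventually_norm_sub_lt 0 hδ)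

noncomputable def ofFinsupp : (S →₀ ℝ) →ₗ[ℝ] C₀(S, ℝ) where
  toFun v := ⟨⟨v, continuous_of_discreteTopology⟩, by
    rw [cocompact_eq_cofinite]
    exact tendsto_const_nhds.congr' (v.hasFiniteSupport.eventually_cofinite_notMem.mono
      fun s hs => (Function.notMem_support.mp hs).symm)⟩
  map_add' _ _ := rfl
  map_smul' _ _ := rfl

@[simp]
theorem ofFinsupp_apply (v : S →₀ ℝ) (s : S) : ofFinsupp v s = v s := rfl

noncomputable def single (s : S) : C₀(S, ℝ) := ofFinsupp (Finsupp.single s 1)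

open Classical in
theorem single_apply (s t : S) : single s t = if s = t then 1 else 0 :=
  Finsupp.single_apply

noncomputable def indicatorCLM (A : Set S) : C₀(S, ℝ) →L[ℝ] C₀(S, ℝ) :=
  LinearMap.mkContinuous
    { toFun f := ⟨⟨A.indicator f, continuous_of_discreteTopology⟩,
        squeeze_zero_norm (fun s => norm_indicator_le_norm_self f s)
          (by simpa using (zero_at_infty f).norm)⟩
      map_add' f g := ext fun s => congrFun (A.indicator_add f g) s
      map_smul' c f := ext fun s => A.indicator_const_smul_apply c f s }
    1 fun f => by
      rw [one_mul, norm_le (norm_nonneg f)]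
      exact fun s => (norm_indicator_le_norm_self f s).trans (norm_apply_le f s)

@[simp]
theorem indicatorCLM_apply (A : Set S) (f : C₀(S, ℝ)) (s : S) :
    indicatorCLM A f s = A.indicator f s := rfl

theorem norm_sub_indicatorCLM_le {A : Set S} {f : C₀(S, ℝ)} {δ : ℝ} (hδ : 0 ≤ δ)
    (hf : ∀ s ∉ A, ‖f s‖ ≤ δ) : ‖f - indicatorCLM A f‖ ≤ δ := by
  refine (norm_le hδ).2 fun s => ?_
  by_cases hs : s ∈ A
  · simpa [hs] using hδ
  · simpa [hs] using hf s hs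

theorem denseRange_ofFinsupp : DenseRange (ofFinsupp : (S →₀ ℝ) → C₀(S, ℝ)) := by
  refine Metric.denseRange_iff.2 fun f r hr => ?_
  set F := {s | r / 2 ≤ ‖f s‖}
  have hF : (F.indicator f).support.Finite :=
    (finite_setOf_le_norm f (half_pos hr)).subset Set.support_indicator_subset
  refine ⟨Finsupp.ofSupportFinite _ hF, ?_⟩
  have : ofFinsupp (Finsupp.ofSupportFinite _ hF) = indicatorCLM F f := rfl
  rw [this, dist_eq_norm]
  refine (norm_sub_indicatorCLM_le (half_pos hr).le fun s hs => ?_).trans_lt (half_lt_self hr)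
  simpa [F] using (not_le.mp hs).le

theorem indicatorCLM_single_of_mem {A : Set S} {s : S} (hs : s ∈ A) :
    indicatorCLM A (single s) = single s := by
  ext t
  by_cases hst : s = t
  · simp [← hst, hs]
  · simp [single_apply, hst]

theorem indicatorCLM_single_of_notMem {A : Set S} {s : S} (hs : s ∉ A) :
    indicatorCLM A (single s) = 0 := by
  ext t
  by_cases hst : s = t
  · simp [← hst, hs]
  · simp [single_apply, hst]

variable {ι : Type*}

theorem continuousMultilinearMap_ext_single [Finite ι] {F : Type*} [AddCommMonoid F]
    [Module ℝ F] [TopologicalSpace F] [T2Space F]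
    {β γ : ContinuousMultilinearMap ℝ (fun _ : ι => C₀(S, ℝ)) F}
    (h : ∀ m : ι → S, β (fun i => single (m i)) = γ (fun i => single (m i))) : β = γ := by
  refine ContinuousMultilinearMap.ext_of_denseRange denseRange_ofFinsupp fun v => ?_
  have := Module.Basis.ext_multilinear (f := β.toMultilinearMap.compLinearMap fun _ => ofFinsupp)
    (g := γ.toMultilinearMap.compLinearMap fun _ => ofFinsupp) (fun _ => Finsupp.basisSingleOne)
    (by simpa [single] using h)
  exact congr($this v)

theorem norm_sum_sign_smul_single_le_one (F : Finset S) (e : F → ℤˣ) :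
    ‖∑ j, ((e j : ℤ) : ℝ) • single (j : S)‖ ≤ 1 := by
  refine (norm_le zero_le_one).2 fun s => ?_
  simp only [single, ← map_smul, ← map_sum, ofFinsupp_apply, Finsupp.finsetSum_apply,
    Finsupp.smul_apply]
  by_cases hs : s ∈ F
  · rw [Fintype.sum_eq_single ⟨s, hs⟩ fun j hj => by simp [Subtype.ext_iff.not.1 hj]]
    rcases Int.units_eq_one_or (e ⟨s, hs⟩) with he | he <;> simp [he]
  · rw [Fintype.sum_eq_zero _ fun j => by simp [show (j : S) ≠ s from fun h => hs (h ▸ j.2)]]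
    simp

theorem summable_sq_apply_single [Fintype ι]
    (α : ContinuousMultilinearMap ℝ (fun _ : ι => C₀(S, ℝ)) ℝ) :
    Summable fun m : ι → S => α (fun i => single (m i)) ^ 2 := by
  classical
  refine summable_of_sum_le (c := ‖α‖ ^ 2) (fun _ => sq_nonneg _) fun u => ?_
  set F : Finset S := u.biUnion fun m => Finset.univ.image m
  have hu : u ⊆ Finset.univ.image fun (m : ι → F) i => (m i : S) := fun m hm =>
    Finset.mem_image.2 ⟨fun i => ⟨m i, Finset.mem_biUnion.2 ⟨m, hm, by simp⟩⟩, by simp, rfl⟩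
  calc _ ≤ ∑ m ∈ Finset.univ.image fun (m : ι → F) i => (m i : S),
          α (fun i => single (m i)) ^ 2 :=
        Finset.sum_le_sum_of_subset_of_nonneg hu fun _ _ _ => sq_nonneg _
    _ = ∑ m : ι → F, α (fun i => single (m i : S)) ^ 2 :=
        Finset.sum_image fun _ _ _ _ h => Subtype.val_injective.comp_left h
    _ ≤ ‖α‖ ^ 2 := α.sum_sq_apply_le_sq_opNorm _ (norm_sum_sign_smul_single_le_one F)

theorem exists_countable_forall_mem_of_apply_single_ne_zero [Fintype ι]
    (α : ContinuousMultilinearMap ℝ (fun _ : ι => C₀(S, ℝ)) ℝ) :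
    ∃ A : Set S, A.Countable ∧
      ∀ m : ι → S, α (fun i => single (m i)) ≠ 0 → ∀ i, m i ∈ A := by
  have hsupp : (Function.support fun m : ι → S => α (fun i => single (m i))).Countable := by
    simpa using (summable_sq_apply_single α).countable_support
  exact ⟨⋃ m ∈ Function.support fun m : ι → S => α (fun i => single (m i)), Set.range m,
    hsupp.biUnion fun m _ => Set.countable_range m,
    fun m hm i => Set.mem_biUnion hm ⟨i, rfl⟩⟩

theorem compContinuousLinearMap_indicatorCLM [Finite ι] {F : Type*} [AddCommMonoid F]
    [Module ℝ F] [TopologicalSpace F] [T2Space F]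
    (β : ContinuousMultilinearMap ℝ (fun _ : ι => C₀(S, ℝ)) F) {A : Set S}
    (hA : ∀ m : ι → S, β (fun i => single (m i)) ≠ 0 → ∀ i, m i ∈ A) :
    β.compContinuousLinearMap (fun _ => indicatorCLM A) = β := by
  refine continuousMultilinearMap_ext_single fun m => ?_
  by_cases hm : ∀ i, m i ∈ A
  · simp [indicatorCLM_single_of_mem, hm]
  · obtain ⟨i, hi⟩ := not_forall.1 hm
    rw [ContinuousMultilinearMap.compContinuousLinearMap_apply,
      β.map_coord_zero i (indicatorCLM_single_of_notMem hi)]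
    exact (not_imp_comm.1 (hA m) hm).symm

theorem apply_eq_apply_of_eqOn [Finite ι] {F : Type*} [AddCommMonoid F] [Module ℝ F]
    [TopologicalSpace F] [T2Space F] (β : ContinuousMultilinearMap ℝ (fun _ : ι => C₀(S, ℝ)) F)
    {A : Set S} (hA : ∀ m : ι → S, β (fun i => single (m i)) ≠ 0 → ∀ i, m i ∈ A)
    {f g : ι → C₀(S, ℝ)} (hfg : ∀ i, Set.EqOn (f i) (g i) A) : β f = β g := by
  rw [← compContinuousLinearMap_indicatorCLM β hA]
  simp only [ContinuousMultilinearMap.compContinuousLinearMap_apply]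
  congr 1
  ext i s
  exact congrFun (Set.indicator_congr (hfg i)) s

end ZeroAtInftyContinuousMap

theorem c0_multilinear_form_countably_determined_general
    {S : Type*} [TopologicalSpace S] [DiscreteTopology S]
    {k : ℕ}
    (α : ContinuousMultilinearMap ℝ (fun _ : Fin k => ZeroAtInftyContinuousMap S ℝ) ℝ) :
    ∃ A : Set S, A.Countable ∧
      ∀ f g : Fin k → ZeroAtInftyContinuousMap S ℝ,
        (∀ i : Fin k, ∀ s ∈ A, f i s = g i s) → α f = α g := by
  obtain ⟨A, hA, hsupp⟩ :=
    ZeroAtInftyContinuousMap.exists_countable_forall_mem_of_apply_single_ne_zero α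
  exact ⟨A, hA, fun f g hfg => ZeroAtInftyContinuousMap.apply_eq_apply_of_eqOn α hsupp hfg⟩

/-- Every bounded `k`-linear form on `c₀(S)` (for an arbitrary discrete
set `S`) depends only on the restriction of its arguments to some countable subset `A ⊆ S`. -/
theorem c0_multilinear_form_countably_determined
    {S : Type*} [TopologicalSpace S] [DiscreteTopology S]
    {k : ℕ} (hk : 1 ≤ k)
    (α : ContinuousMultilinearMap ℝ (fun _ : Fin k => ZeroAtInftyContinuousMap S ℝ) ℝ) :
    ∃ A : Set S, A.Countable ∧
      ∀ f g : Fin k → ZeroAtInftyContinuousMap S ℝ,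
        (∀ i : Fin k, ∀ s ∈ A, f i s = g i s) → α f = α g :=
  c0_multilinear_form_countably_determined_general α
end

section
/- Let S be an arbitrary set and let X be a random variable on a probability space with values in c₀(S), the Banach space of real-valued functions on S vanishing at infinity with the supremum norm, such that the real-valued map ω ↦ X(ω)(s) is measurable for every s ∈ S. Then there exists a countable subset S₀ ⊆ S such that for every s ∈ S ∖ S₀ one has X(ω)(s) = 0 for almost every ω. -/
open MeasureTheory Filter
open scoped ZeroAtInfty ENNReal Topology

/-!
For fixed `ε > 0`, every `ω` lies in only finitely many of the events `{|X(s)| ≥ ε}`, so along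
any injective sequence of points of `S` the indicators of these events tend to `0` pointwise and,
by dominated convergence, their probabilities tend to `0`. Hence only finitely many events have
probability `≥ δ` for each `δ > 0`, and only countably many have positive probability.
-/

theorem ZeroAtInftyContinuousMap.finite_setOf_le_norm_s11 {S E : Type*} [TopologicalSpace S]
    [DiscreteTopology S] [SeminormedAddGroup E] (f : C₀(S, E)) {ε : ℝ} (hε : 0 < ε) :
    {s | ε ≤ ‖f s‖}.Finite := by
  have hsmall : ∀ᶠ s in cofinite, f s ∈ Metric.ball 0 ε := by
    rw [← cocompact_eq_cofinite]
    exact f.zero_at_infty' (Metric.ball_mem_nhds 0 hε)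
  simpa [mem_ball_zero_iff] using eventually_cofinite.1 hsmall

namespace MeasureTheory

variable {S Ω : Type*} [MeasurableSpace Ω] {μ : Measure Ω} [IsFiniteMeasure μ]

theorem finite_setOf_le_measure_of_finite_setOf_mem {A : S → Set Ω}
    (hA : ∀ s, MeasurableSet (A s)) (hfin : ∀ ω, {s | ω ∈ A s}.Finite) {δ : ℝ≥0∞} (hδ : δ ≠ 0) :
    {s | δ ≤ μ (A s)}.Finite := by
  by_contra hinf
  let e := Set.Infinite.natEmbedding _ hinf
  have he : Function.Injective fun k => (e k : S) := Subtype.val_injective.comp e.injective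
  have hlim : ∀ ω, ∀ᶠ k in atTop, ω ∈ A (e k) ↔ ω ∈ (∅ : Set Ω) := fun ω => by
    rw [← Nat.cofinite_eq_atTop]
    simpa using he.tendsto_cofinite.eventually (hfin ω).eventually_cofinite_notMem
  have htendsto : Tendsto (fun k => μ (A (e k))) atTop (𝓝 (μ ∅)) :=
    tendsto_measure_of_tendsto_indicator_of_isFiniteMeasure atTop μ (fun k => hA _) hlim
  rw [measure_empty] at htendsto
  exact hδ (nonpos_iff_eq_zero.1 (ge_of_tendsto' htendsto fun k => (e k).2))

theorem countable_setOf_measure_ne_zero_of_finite_setOf_mem {A : S → Set Ω}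
    (hA : ∀ s, MeasurableSet (A s)) (hfin : ∀ ω, {s | ω ∈ A s}.Finite) :
    {s | μ (A s) ≠ 0}.Countable := by
  have hcover : {s | μ (A s) ≠ 0} ⊆ ⋃ n : ℕ, {s | (n : ℝ≥0∞)⁻¹ ≤ μ (A s)} := fun s hs =>
    let ⟨n, hn⟩ := ENNReal.exists_inv_nat_lt hs
    Set.mem_iUnion.2 ⟨n, hn.le⟩
  refine Set.Countable.mono hcover (Set.countable_iUnion fun n => ?_)
  exact (finite_setOf_le_measure_of_finite_setOf_mem hA hfin
    (ENNReal.inv_ne_zero.2 (ENNReal.natCast_ne_top n))).countable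

theorem countable_setOf_not_ae_eq_zero {E : Type*} [NormedAddCommGroup E] [MeasurableSpace E]
    [OpensMeasurableSpace E] {f : Ω → S → E} (hf : ∀ s, Measurable fun ω => f ω s)
    (hfin : ∀ ω ε, 0 < ε → {s | ε ≤ ‖f ω s‖}.Finite) :
    {s | ¬ ∀ᵐ ω ∂μ, f ω s = 0}.Countable := by
  have hcover : {s | ¬ ∀ᵐ ω ∂μ, f ω s = 0} ⊆
      ⋃ n : ℕ, {s | μ {ω | 1 / ((n : ℝ) + 1) ≤ ‖f ω s‖} ≠ 0} := by
    intro s hs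
    have hne : {ω | f ω s ≠ 0} ⊆ ⋃ n : ℕ, {ω | 1 / ((n : ℝ) + 1) ≤ ‖f ω s‖} := fun ω (hω : f ω s ≠ 0) =>
      let ⟨n, hn⟩ := exists_nat_one_div_lt (norm_pos_iff.2 hω)
      Set.mem_iUnion.2 ⟨n, (hn.le : _ ≤ ‖f ω s‖)⟩
    by_contra hnull
    simp only [Set.mem_iUnion, not_exists, Set.mem_ofPred_eq, not_not] at hnull
    exact hs (ae_iff.2 (measure_mono_null hne (measure_iUnion_null hnull)))
  refine Set.Countable.mono hcover (Set.countable_iUnion fun n => ?_)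
  exact countable_setOf_measure_ne_zero_of_finite_setOf_mem
    (fun s => measurableSet_le measurable_const (hf s).norm)
    (fun ω => hfin ω _ Nat.one_div_pos_of_nat)

end MeasureTheory

/-- If `X` is a `c₀(S)`-valued random variable (on an arbitrary discrete set
`S`) whose point evaluations are measurable, then there is a countable set `S₀ ⊆ S` such
that for every `s ∉ S₀` one has `X(s) = 0` almost surely. -/
theorem c0_pointwise_measurable_ae_zero_off_countable
    {S : Type*} [TopologicalSpace S] [DiscreteTopology S]
    {Ω : Type*} [MeasurableSpace Ω] {μ : Measure Ω} [IsProbabilityMeasure μ]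
    (X : Ω → ZeroAtInftyContinuousMap S ℝ)
    (hX : ∀ s : S, Measurable fun ω => X ω s) :
    ∃ S₀ : Set S, S₀.Countable ∧ ∀ s ∉ S₀, ∀ᵐ ω ∂μ, X ω s = 0 :=
  ⟨{s | ¬ ∀ᵐ ω ∂μ, X ω s = 0},
    countable_setOf_not_ae_eq_zero hX fun ω _ hε => (X ω).finite_setOf_le_norm_s11 hε,
    fun _ hs => not_not.1 hs⟩
end

section
/- Let H be a separable real Hilbert space with orthonormal (Hilbert) basis (e_n)_{n∈ℕ}, let A be an index set, and for each α ∈ A let X_α be a Borel measurable H-valued random variable on a probability space (Ω_α, F_α, P_α). Suppose there is a summable sequence λ_n ≥ 0 such that for every α ∈ A and every y ∈ H the random variable ⟨y, X_α⟩² is integrable with E⟨y, X_α⟩² ≤ ∑_{n=0}^∞ λ_n ⟨y, e_n⟩². Then the family {X_α : α ∈ A} is tight: for every ε > 0 there exists a compact set K ⊆ H such that P_α(X_α ∈ K) ≥ 1 − ε for all α ∈ A. -/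
/-!
Testing the moment bound on `y = e n` gives `E⟪e n, X_α⟫² ≤ λ n`, so by Parseval the expected
squared distance from `X_α` to `span {e 0, …, e (M - 1)}` is at most the tail `∑_{n ≥ M} λ n`,
uniformly in `α`. Markov's inequality then makes `‖X_α‖ > R` and, for suitable `M_k`, distance
`> 1/(k+1)` to the `M_k`-th span uniformly unlikely, with total probability `≤ ε`. What remains
(a closed ball cut down by these distance constraints) is compact: each of its points lies within
`1/(k+1)` of the image of the ball under a finite-rank projection, so it is totally bounded.
-/

open Filter Topology Metric MeasureTheory
open scoped ENNReal InnerProductSpace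

theorem Metric.totallyBounded_of_forall_exists_dist_lt {α : Type*} [PseudoMetricSpace α]
    {s : Set α} (h : ∀ δ > 0, ∃ t, TotallyBounded t ∧ ∀ x ∈ s, ∃ y ∈ t, dist x y < δ) :
    TotallyBounded s := by
  refine totallyBounded_iff.2 fun ε hε => ?_
  obtain ⟨t, ht, hst⟩ := h (ε / 2) (half_pos hε)
  obtain ⟨u, hu, htu⟩ := totallyBounded_iff.1 ht (ε / 2) (half_pos hε)
  refine ⟨u, hu, fun x hx => ?_⟩
  obtain ⟨y, hyt, hxy⟩ := hst x hx
  obtain ⟨z, hzu, hyz⟩ := Set.mem_iUnion₂.1 (htu hyt)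
  refine Set.mem_iUnion₂.2 ⟨z, hzu, ?_⟩
  calc dist x z ≤ dist x y + dist y z := dist_triangle x y z
    _ < ε / 2 + ε / 2 := add_lt_add hxy hyz
    _ = ε := add_halves ε

theorem MeasureTheory.IsTightMeasureSet.exists_isCompact_one_sub_le_measureReal_preimage
    {𝓧 : Type*} [TopologicalSpace 𝓧] [T2Space 𝓧] [MeasurableSpace 𝓧] [OpensMeasurableSpace 𝓧]
    {ι : Type*} {Ω : ι → Type*} [∀ i, MeasurableSpace (Ω i)] {μ : ∀ i, Measure (Ω i)}
    [∀ i, IsProbabilityMeasure (μ i)] {X : ∀ i, Ω i → 𝓧} (hX : ∀ i, Measurable (X i))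
    (h : IsTightMeasureSet (Set.range fun i => (μ i).map (X i))) {ε : ℝ} (hε : 0 < ε) :
    ∃ K, IsCompact K ∧ ∀ i, 1 - ε ≤ (μ i).real (X i ⁻¹' K) := by
  obtain ⟨K, hK, hKμ⟩ := isTightMeasureSet_iff_exists_isCompact_measure_compl_le.1 h
    (ENNReal.ofReal ε) (ENNReal.ofReal_pos.2 hε)
  refine ⟨K, hK, fun i => ?_⟩
  have hcompl := hKμ _ ⟨i, rfl⟩
  rw [Measure.map_apply (hX i) hK.measurableSet.compl, Set.preimage_compl] at hcompl
  have hreal : (μ i).real (X i ⁻¹' K)ᶜ ≤ ε := ENNReal.toReal_le_of_le_ofReal hε.le hcompl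
  rw [probReal_compl_eq_one_sub ((hX i) hK.measurableSet)] at hreal
  linarith

namespace HilbertBasis

variable {𝕜 H : Type*} [RCLike 𝕜] [NormedAddCommGroup H] [InnerProductSpace 𝕜 H]
  (e : HilbertBasis ℕ 𝕜 H)

noncomputable def partialSum (M : ℕ) : H →L[𝕜] H :=
  ∑ i ∈ Finset.range M, (innerSL 𝕜 (e i)).smulRight (e i)

theorem partialSum_apply (M : ℕ) (x : H) :
    e.partialSum M x = ∑ i ∈ Finset.range M, ⟪e i, x⟫_𝕜 • e i := by
  simp [partialSum]

theorem isCompactOperator_partialSum (M : ℕ) : IsCompactOperator (e.partialSum M) :=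
  Submodule.sum_mem (compactOperator (RingHom.id 𝕜) H H) fun i _ =>
    (isCompactOperator_of_locallyCompactSpace_dom (innerSL 𝕜 (e i))).continuous_comp
      (continuous_id.smul continuous_const)

theorem inner_partialSum (M n : ℕ) (x : H) :
    ⟪e n, e.partialSum M x⟫_𝕜 = if n < M then ⟪e n, x⟫_𝕜 else 0 := by
  simp [partialSum_apply, inner_sum, inner_smul_right, orthonormal_iff_ite.mp e.orthonormal]

theorem hasSum_norm_inner_sq (x : H) : HasSum (fun n => ‖⟪e n, x⟫_𝕜‖ ^ 2) (‖x‖ ^ 2) := by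
  have hterm (n : ℕ) : ⟪x, e n⟫_𝕜 * ⟪e n, x⟫_𝕜 = ((‖⟪e n, x⟫_𝕜‖ ^ 2 : ℝ) : 𝕜) := by
    rw [← inner_conj_symm, RCLike.conj_mul, RCLike.ofReal_pow]
  have h := e.hasSum_inner_mul_inner x x
  simp only [hterm, inner_self_eq_norm_sq_to_K] at h
  exact_mod_cast h

theorem hasSum_norm_inner_sq_nat_add (M : ℕ) (x : H) :
    HasSum (fun n => ‖⟪e (n + M), x⟫_𝕜‖ ^ 2) (‖x - e.partialSum M x‖ ^ 2) := by
  have hcoef (n : ℕ) : ⟪e n, x - e.partialSum M x⟫_𝕜 = if n < M then 0 else ⟪e n, x⟫_𝕜 := by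
    rw [inner_sub_right, inner_partialSum]
    split_ifs <;> simp
  have h := e.hasSum_norm_inner_sq (x - e.partialSum M x)
  rw [← hasSum_nat_add_iff' M] at h
  have hhead : ∑ n ∈ Finset.range M, ‖⟪e n, x - e.partialSum M x⟫_𝕜‖ ^ 2 = 0 :=
    Finset.sum_eq_zero fun n hn => by simp [hcoef, Finset.mem_range.1 hn]
  rw [hhead, sub_zero] at h
  simpa [hcoef] using h

theorem enorm_sub_partialSum_sq (M : ℕ) (x : H) :
    ‖x - e.partialSum M x‖ₑ ^ 2 = ∑' n, ‖⟪e (n + M), x⟫_𝕜‖ₑ ^ 2 := by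
  have h := e.hasSum_norm_inner_sq_nat_add M x
  simp only [← ofReal_norm, ← ENNReal.ofReal_pow (norm_nonneg _)]
  rw [← ENNReal.ofReal_tsum_of_nonneg (fun n => by positivity) h.summable, h.tsum_eq]

section Moments

variable [MeasurableSpace H] [OpensMeasurableSpace H] {ν : Measure H} {lam : ℕ → ℝ≥0∞}

theorem lintegral_enorm_sub_partialSum_sq_le
    (hν : ∀ n, ∫⁻ x, ‖⟪e n, x⟫_𝕜‖ₑ ^ 2 ∂ν ≤ lam n) (M : ℕ) :
    ∫⁻ x, ‖x - e.partialSum M x‖ₑ ^ 2 ∂ν ≤ ∑' n, lam (n + M) := by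
  simp_rw [e.enorm_sub_partialSum_sq]
  rw [lintegral_tsum fun n => by fun_prop]
  exact ENNReal.tsum_le_tsum fun n => hν (n + M)

theorem measure_norm_sub_partialSum_gt_le
    (hν : ∀ n, ∫⁻ x, ‖⟪e n, x⟫_𝕜‖ₑ ^ 2 ∂ν ≤ lam n) (M : ℕ) {r : ℝ} (hr : 0 < r) :
    ν {x | r < ‖x - e.partialSum M x‖} ≤ (∑' n, lam (n + M)) / ENNReal.ofReal r ^ 2 := by
  have hsub : {x | r < ‖x - e.partialSum M x‖} ⊆
      {x | ENNReal.ofReal r ^ 2 ≤ ‖x - e.partialSum M x‖ₑ ^ 2} := fun x hx => by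
    rw [Set.mem_ofPred_eq, ← ofReal_norm]
    exact pow_le_pow_left₀ zero_le (ENNReal.ofReal_le_ofReal (le_of_lt hx)) 2
  have hcont : Continuous fun x => ‖x - e.partialSum M x‖ₑ ^ 2 := by fun_prop
  calc ν {x | r < ‖x - e.partialSum M x‖}
      ≤ (∫⁻ x, ‖x - e.partialSum M x‖ₑ ^ 2 ∂ν) / ENNReal.ofReal r ^ 2 :=
        (measure_mono hsub).trans (meas_ge_le_lintegral_div hcont.measurable.aemeasurable
          (by positivity) (by simp))
    _ ≤ (∑' n, lam (n + M)) / ENNReal.ofReal r ^ 2 := by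
        gcongr
        exact e.lintegral_enorm_sub_partialSum_sq_le hν M

end Moments

variable [CompleteSpace H]

theorem isCompact_of_norm_sub_partialSum_lt {K : Set H} (hK : IsClosed K)
    (hb : Bornology.IsBounded K) (htail : ∀ δ > 0, ∃ M, ∀ x ∈ K, ‖x - e.partialSum M x‖ < δ) :
    IsCompact K := by
  refine (totallyBounded_of_forall_exists_dist_lt fun δ hδ => ?_).isCompact_of_isClosed hK
  obtain ⟨M, hM⟩ := htail δ hδ
  obtain ⟨C, hC, hKC⟩ := (e.isCompactOperator_partialSum M).image_subset_compact_of_bounded hb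
  exact ⟨C, hC.totallyBounded, fun x hx =>
    ⟨_, hKC (Set.mem_image_of_mem _ hx), by rw [dist_eq_norm]; exact hM x hx⟩⟩

theorem isTightMeasureSet_of_tendsto_measure_norm_sub_partialSum_gt [MeasurableSpace H]
    {S : Set (Measure H)}
    (hball : Tendsto (fun r : ℝ => ⨆ ν ∈ S, ν {x | r < ‖x‖}) atTop (𝓝 0))
    (htail : ∀ r > 0,
      Tendsto (fun M => ⨆ ν ∈ S, ν {x | r < ‖x - e.partialSum M x‖}) atTop (𝓝 0)) :
    IsTightMeasureSet S := by
  refine isTightMeasureSet_iff_exists_isCompact_measure_compl_le.2 fun ε hε => ?_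
  obtain ⟨R, hR⟩ := (hball.eventually (ge_mem_nhds (ENNReal.half_pos hε.ne'))).exists
  obtain ⟨δ, hδ, hδε⟩ := ENNReal.exists_pos_sum_of_countable' (ENNReal.half_pos hε.ne').ne' ℕ
  have hm (k : ℕ) : ∃ M, ⨆ ν ∈ S, ν {x | (k + 1 : ℝ)⁻¹ < ‖x - e.partialSum M x‖} ≤ δ k :=
    ((htail _ (by positivity)).eventually (ge_mem_nhds (hδ k))).exists
  choose m hm using hm
  set K := closedBall (0 : H) R ∩ ⋂ k, {x | ‖x - e.partialSum (m k) x‖ ≤ (k + 1 : ℝ)⁻¹}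
  have hKc : Kᶜ = {x | R < ‖x‖} ∪ ⋃ k : ℕ, {x | (k + 1 : ℝ)⁻¹ < ‖x - e.partialSum (m k) x‖} := by
    ext x
    simp only [K, Set.mem_compl_iff, Set.mem_inter_iff, mem_closedBall_zero_iff, Set.mem_iInter,
      Set.mem_ofPred_eq, Set.mem_union, Set.mem_iUnion, not_and_or, not_le, not_forall]
  have hK : IsCompact K := by
    refine e.isCompact_of_norm_sub_partialSum_lt ?_
      (isBounded_closedBall.subset Set.inter_subset_left) fun η hη => ?_
    · exact isClosed_closedBall.inter (isClosed_iInter fun k =>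
        isClosed_le (by fun_prop) continuous_const)
    · obtain ⟨k, hk⟩ := exists_nat_one_div_lt hη
      refine ⟨m k, fun x hx => lt_of_le_of_lt ?_ hk⟩
      simpa using Set.mem_iInter.1 hx.2 k
  refine ⟨K, hK, fun ν hν => ?_⟩
  calc ν Kᶜ ≤ ν {x | R < ‖x‖}
        + ∑' k : ℕ, ν {x | (k + 1 : ℝ)⁻¹ < ‖x - e.partialSum (m k) x‖} := by
        rw [hKc]
        exact (measure_union_le _ _).trans (by gcongr; exact measure_iUnion_le _)
    _ ≤ ε / 2 + ∑' k, δ k :=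
        add_le_add ((le_iSup₂ ν hν).trans hR)
          (ENNReal.tsum_le_tsum fun k => (le_iSup₂ ν hν).trans (hm k))
    _ ≤ ε / 2 + ε / 2 := by gcongr
    _ = ε := ENNReal.add_halves ε

theorem isTightMeasureSet_of_lintegral_enorm_inner_sq_le [MeasurableSpace H]
    [OpensMeasurableSpace H] {S : Set (Measure H)} {lam : ℕ → ℝ≥0∞} (hlam : ∑' n, lam n ≠ ∞)
    (hS : ∀ ν ∈ S, ∀ n, ∫⁻ x, ‖⟪e n, x⟫_𝕜‖ₑ ^ 2 ∂ν ≤ lam n) :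
    IsTightMeasureSet S := by
  have hbound (M : ℕ) {r : ℝ} (hr : 0 < r) : ⨆ ν ∈ S, ν {x | r < ‖x - e.partialSum M x‖}
      ≤ (∑' n, lam (n + M)) / ENNReal.ofReal r ^ 2 :=
    iSup₂_le fun ν hν => e.measure_norm_sub_partialSum_gt_le (hS ν hν) M hr
  refine e.isTightMeasureSet_of_tendsto_measure_norm_sub_partialSum_gt ?_ fun r hr => ?_
  · have hlim : Tendsto (fun r : ℝ => (∑' n, lam n) / ENNReal.ofReal r ^ 2) atTop (𝓝 0) := by
      simpa using ENNReal.Tendsto.const_div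
        (ENNReal.Tendsto.pow (n := 2) ENNReal.tendsto_ofReal_atTop) (Or.inr hlam)
    refine tendsto_of_tendsto_of_tendsto_of_le_of_le' tendsto_const_nhds hlim
      (Eventually.of_forall fun _ => zero_le) ?_
    filter_upwards [eventually_gt_atTop 0] with r hr
    simpa [partialSum] using hbound 0 hr
  · have hlim : Tendsto (fun M => (∑' n, lam (n + M)) / ENNReal.ofReal r ^ 2) atTop (𝓝 0) := by
      simpa using ENNReal.Tendsto.div_const (ENNReal.tendsto_sum_nat_add lam hlam)
        (Or.inr (by positivity))
    exact tendsto_of_tendsto_of_tendsto_of_le_of_le tendsto_const_nhds hlim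
      (fun _ => zero_le) fun M => hbound M hr

end HilbertBasis

theorem hilbert_dominated_second_moments_tight_general
    {H : Type*} [NormedAddCommGroup H] [InnerProductSpace ℝ H] [CompleteSpace H]
    [MeasurableSpace H] [BorelSpace H]
    (e : HilbertBasis ℕ ℝ H)
    {A : Type*} (Ω : A → Type*) [∀ a, MeasurableSpace (Ω a)]
    (μ : ∀ a, Measure (Ω a)) [∀ a, IsProbabilityMeasure (μ a)]
    (X : ∀ a, Ω a → H) (hX : ∀ a, Measurable (X a))
    (lam : ℕ → ℝ) (hlam : Summable lam)
    (hmom : ∀ (a : A) (y : H),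
      Integrable (fun ω => (inner ℝ y (X a ω) : ℝ) ^ 2) (μ a) ∧
      ∫ ω, (inner ℝ y (X a ω) : ℝ) ^ 2 ∂(μ a) ≤ ∑' n, lam n * (inner ℝ y (e n) : ℝ) ^ 2) :
    ∀ ε : ℝ, 0 < ε → ∃ K : Set H, IsCompact K ∧
      ∀ a : A, 1 - ε ≤ ((μ a) (X a ⁻¹' K)).toReal := by
  intro ε hε
  have hcoord (a : A) (n : ℕ) :
      ∫⁻ x, ‖⟪e n, x⟫_ℝ‖ₑ ^ 2 ∂(μ a).map (X a) ≤ ENNReal.ofReal (lam n) := by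
    have hdiag : ∑' j, lam j * ⟪e n, e j⟫_ℝ ^ 2 = lam n := by
      simp [orthonormal_iff_ite.mp e.orthonormal]
    have hsq (r : ℝ) : ‖r‖ₑ ^ 2 = ENNReal.ofReal (r ^ 2) := by
      rw [← ofReal_norm, ← ENNReal.ofReal_pow (norm_nonneg _), Real.norm_eq_abs, sq_abs]
    rw [lintegral_map (by fun_prop) (hX a)]
    simp only [hsq]
    rw [← ofReal_integral_eq_lintegral_ofReal (hmom a (e n)).1 (ae_of_all _ fun _ => sq_nonneg _)]
    exact ENNReal.ofReal_le_ofReal (hdiag ▸ (hmom a (e n)).2)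
  have htight : IsTightMeasureSet (Set.range fun a => (μ a).map (X a)) :=
    e.isTightMeasureSet_of_lintegral_enorm_inner_sq_le
      (ENNReal.tsum_coe_ne_top_iff_summable.2 hlam.toNNReal) (by rintro _ ⟨a, rfl⟩; exact hcoord a)
  exact htight.exists_isCompact_one_sub_le_measureReal_preimage hX hε

/-- Let `H` be a separable Hilbert space with Hilbert basis `(e_n)`, and let
`(X_α)` be a family of Borel measurable `H`-valued random variables whose second moment
forms are uniformly dominated by a positive trace class operator `∑ λ_n e_n ⊗ e_n`
(`λ_n ≥ 0` summable). Then the family `(X_α)` is tight. -/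
theorem hilbert_dominated_second_moments_tight
    {H : Type*} [NormedAddCommGroup H] [InnerProductSpace ℝ H] [CompleteSpace H]
    [SecondCountableTopology H] [MeasurableSpace H] [BorelSpace H]
    (e : HilbertBasis ℕ ℝ H)
    {A : Type*} (Ω : A → Type*) [∀ a, MeasurableSpace (Ω a)]
    (μ : ∀ a, Measure (Ω a)) [∀ a, IsProbabilityMeasure (μ a)]
    (X : ∀ a, Ω a → H) (hX : ∀ a, Measurable (X a))
    (lam : ℕ → ℝ) (hlam0 : ∀ n, 0 ≤ lam n) (hlam : Summable lam)
    (hmom : ∀ (a : A) (y : H),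
      Integrable (fun ω => (inner ℝ y (X a ω) : ℝ) ^ 2) (μ a) ∧
      ∫ ω, (inner ℝ y (X a ω) : ℝ) ^ 2 ∂(μ a) ≤ ∑' n, lam n * (inner ℝ y (e n) : ℝ) ^ 2) :
    ∀ ε : ℝ, 0 < ε → ∃ K : Set H, IsCompact K ∧
      ∀ a : A, 1 - ε ≤ ((μ a) (X a ⁻¹' K)).toReal :=
  hilbert_dominated_second_moments_tight_general e Ω μ X hX lam hlam hmom
end

section
/- Let H be a real Hilbert space (not necessarily separable) and let X be an H-valued random variable on a probability space that is weakly measurable, i.e., ω ↦ ⟨y, X(ω)⟩ is measurable for every y ∈ H. Then X is weakly a.s. separably valued: there exists a separable closed subspace M ⊆ H such that for every y ∈ H orthogonal to M (i.e., ⟨y, m⟩ = 0 for all m ∈ M), one has ⟨y, X(ω)⟩ = 0 for almost every ω. -/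
/-!
For a countable set `s ⊆ H` let `K s` be the closed span of `s` and
`Φ s = ∫ arctan ‖P_{K s} X‖ dμ`. Since `K s` is separable, `‖P_{K s} X‖` is a countable supremum
of the measurable functions `⟪d, X⟫`; `Φ` is monotone in `s` and bounded, so its supremum over
countable sets is attained at a countable union `T`. If `y ⊥ K T` but `⟪y, X⟫ ≠ 0` on a non-null
set, then adding `y` to `T` strictly increases `‖P X‖` there, hence strictly increases `Φ`.
-/

open MeasureTheory
open scoped ENNReal InnerProductSpace

theorem Monotone.exists_isMaxOn_countable {α β : Type*} [CompleteLinearOrder β]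
    [TopologicalSpace β] [OrderTopology β] [FirstCountableTopology β]
    {Φ : Set α → β} (hΦ : Monotone Φ) :
    ∃ T : Set α, T.Countable ∧ IsMaxOn Φ {s | s.Countable} T := by
  obtain ⟨u, -, -, hu, huΦ⟩ :=
    (isLUB_sSup (Φ '' {s | s.Countable})).exists_seq_monotone_tendsto
      ⟨_, Set.mem_image_of_mem Φ Set.countable_empty⟩
  choose s hs hsu using huΦ
  refine ⟨⋃ n, s n, Set.countable_iUnion hs, fun t ht => ?_⟩
  have hsup : sSup (Φ '' {s | s.Countable}) ≤ Φ (⋃ n, s n) :=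
    le_of_tendsto' hu fun n => hsu n ▸ hΦ (Set.subset_iUnion s n)
  exact (le_sSup (Set.mem_image_of_mem Φ ht)).trans hsup

theorem lintegral_ofReal_arctan_lt {Ω : Type*} [MeasurableSpace Ω] {μ : Measure Ω}
    [IsFiniteMeasure μ] {f g : Ω → ℝ} (hg : Measurable g) (hf : 0 ≤ f) (hfg : f ≤ g)
    {s : Set Ω} (hs : μ s ≠ 0) (hfg_lt : ∀ ω ∈ s, f ω < g ω) :
    ∫⁻ ω, ENNReal.ofReal (Real.arctan (f ω)) ∂μ < ∫⁻ ω, ENNReal.ofReal (Real.arctan (g ω)) ∂μ := by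
  have hfin : ∫⁻ ω, ENNReal.ofReal (Real.arctan (f ω)) ∂μ ≠ ∞ := by
    refine ((lintegral_mono fun ω => ENNReal.ofReal_le_ofReal
      (Real.arctan_lt_pi_div_two (f ω)).le).trans_lt ?_).ne
    rw [lintegral_const]
    exact ENNReal.mul_lt_top ENNReal.ofReal_lt_top (measure_lt_top μ _)
  refine lintegral_strict_mono_of_ae_le_of_ae_lt_on
    (Real.continuous_arctan.measurable.comp hg).ennreal_ofReal.aemeasurable hfin
    (.of_forall fun ω => ENNReal.ofReal_le_ofReal (Real.arctan_strictMono.monotone (hfg ω))) hs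
    (.of_forall fun ω hω =>
      ENNReal.ofReal_lt_ofReal_iff'.2 ⟨Real.arctan_strictMono (hfg_lt ω hω), ?_⟩)
  rw [← Real.arctan_zero]
  exact Real.arctan_strictMono ((hf ω).trans_lt (hfg_lt ω hω))

theorem TopologicalSpace.IsSeparable.topologicalClosure_span {R M : Type*} [Semiring R]
    [TopologicalSpace R] [SeparableSpace R] [AddCommMonoid M] [Module R M] [TopologicalSpace M]
    [ContinuousAdd M] [ContinuousSMul R M] {s : Set M} (hs : IsSeparable s) :
    IsSeparable ((Submodule.span R s).topologicalClosure : Set M) := by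
  rw [Submodule.topologicalClosure_coe]
  exact hs.span.closure

namespace Submodule

variable {H : Type*} [NormedAddCommGroup H] [InnerProductSpace ℝ H]

theorem inner_starProjection_eq_of_mem_left {K : Submodule ℝ H}
    [K.HasOrthogonalProjection] {u : H} (hu : u ∈ K) (v : H) :
    ⟪u, K.starProjection v⟫_ℝ = ⟪u, v⟫_ℝ := by
  rw [← inner_starProjection_left_eq_right, (starProjection_eq_self_iff (K := K)).2 hu]

theorem norm_starProjection_le_of_le {K K' : Submodule ℝ H} [K.HasOrthogonalProjection]
    [K'.HasOrthogonalProjection] (h : K ≤ K') (x : H) :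
    ‖K.starProjection x‖ ≤ ‖K'.starProjection x‖ := by
  rw [← starProjection_comp_starProjection_of_le h]
  exact K.norm_starProjection_apply_le _

theorem norm_starProjection_lt_of_le {K K' : Submodule ℝ H} [K.HasOrthogonalProjection]
    [K'.HasOrthogonalProjection] (h : K ≤ K') {y x : H} (hyK' : y ∈ K') (hyK : y ∈ Kᗮ)
    (hyx : ⟪y, x⟫_ℝ ≠ 0) : ‖K.starProjection x‖ < ‖K'.starProjection x‖ := by
  set q := K'.starProjection x
  have hq : K.starProjection q = K.starProjection x := by
    rw [← ContinuousLinearMap.comp_apply, starProjection_comp_starProjection_of_le h]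
  have hq_perp : Kᗮ.starProjection q ≠ 0 := by
    intro h0
    apply hyx
    rw [← inner_starProjection_eq_of_mem_left hyK', ← inner_starProjection_eq_of_mem_left hyK, h0,
      inner_zero_right]
  have hpyth := norm_sq_eq_add_norm_sq_starProjection q K
  rw [hq] at hpyth
  have : 0 < ‖Kᗮ.starProjection q‖ ^ 2 := by positivity
  exact lt_of_pow_lt_pow_left₀ 2 (norm_nonneg _) (by linarith)

theorem norm_starProjection_eq_iSup (K : Submodule ℝ H) [K.HasOrthogonalProjection]
    {D : Set H} (hDK : D ⊆ K ∩ Metric.closedBall 0 1)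
    (hKD : ↑K ∩ Metric.closedBall 0 1 ⊆ closure D) (x : H) :
    ‖K.starProjection x‖ = ⨆ d : D, ⟪(d : H), x⟫_ℝ := by
  have h0 : (0 : H) ∈ closure D := hKD ⟨K.zero_mem, Metric.mem_closedBall_self zero_le_one⟩
  have : Nonempty D := (closure_nonempty_iff.1 ⟨0, h0⟩).to_subtype
  set p := K.starProjection x
  have hle : ∀ d ∈ (K : Set H) ∩ Metric.closedBall 0 1, ⟪d, x⟫_ℝ ≤ ‖p‖ := by
    rintro d ⟨hdK, hd1⟩
    calc ⟪d, x⟫_ℝ = ⟪d, p⟫_ℝ := (inner_starProjection_eq_of_mem_left hdK x).symm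
      _ ≤ ‖d‖ * ‖p‖ := real_inner_le_norm d p
      _ ≤ ‖p‖ := mul_le_of_le_one_left (norm_nonneg p) (mem_closedBall_zero_iff.1 hd1)
  -- `‖p‖⁻¹ • p` attains the supremum, also when `p = 0`
  set u := ‖p‖⁻¹ • p
  have huK : u ∈ (K : Set H) ∩ Metric.closedBall 0 1 := by
    refine ⟨K.smul_mem _ (K.starProjection_apply_mem x), mem_closedBall_zero_iff.2 ?_⟩
    rw [norm_smul, norm_inv, norm_norm]
    exact inv_mul_le_one_of_le₀ le_rfl (norm_nonneg p)
  have hux : ⟪u, x⟫_ℝ = ‖p‖ := by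
    have : ⟪p, x⟫_ℝ = ‖p‖ ^ 2 := by
      rw [← real_inner_self_eq_norm_sq,
        inner_starProjection_eq_of_mem_left (K.starProjection_apply_mem x)]
    rw [real_inner_smul_left, this]
    rcases eq_or_ne ‖p‖ 0 with hp | hp
    · simp [hp]
    · field_simp
  refine (ciSup_eq_of_forall_le_of_forall_lt_exists_gt (fun d : D => hle d (hDK d.2))
    fun w hw => ?_).symm
  obtain ⟨d, hdw, hdD⟩ := _root_.mem_closure_iff.1 (hKD huK) {d | w < ⟪d, x⟫_ℝ}
    (isOpen_lt continuous_const (continuous_id.inner continuous_const))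
    (show w < ⟪u, x⟫_ℝ from hux ▸ hw)
  exact ⟨⟨d, hdD⟩, hdw⟩

theorem measurable_norm_starProjection {Ω : Type*} [MeasurableSpace Ω] {X : Ω → H}
    (hX : ∀ y : H, Measurable fun ω => ⟪y, X ω⟫_ℝ) (K : Submodule ℝ H) [K.HasOrthogonalProjection]
    (hK : TopologicalSpace.IsSeparable (K : Set H)) :
    Measurable fun ω => ‖K.starProjection (X ω)‖ := by
  have hball : TopologicalSpace.IsSeparable ((K : Set H) ∩ Metric.closedBall 0 1) :=
    hK.mono Set.inter_subset_left
  obtain ⟨D, hDK, hD, hKD⟩ := hball.exists_countable_dense_subset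
  have := hD.to_subtype
  simp_rw [K.norm_starProjection_eq_iSup hDK hKD]
  exact Measurable.iSup fun d => hX d

end Submodule

open Submodule

/-- Every weakly measurable random variable in a (not necessarily separable)
Hilbert space is weakly a.s. separably valued: there is a closed separable subspace `M` such
that every vector orthogonal to `M` pairs to `0` with `X` almost surely. -/
theorem hilbert_weakly_measurable_weakly_ae_separably_valued
    {H : Type*} [NormedAddCommGroup H] [InnerProductSpace ℝ H] [CompleteSpace H]
    {Ω : Type*} [MeasurableSpace Ω] {μ : Measure Ω} [IsProbabilityMeasure μ]
    (X : Ω → H) (hX : ∀ y : H, Measurable fun ω => (inner ℝ y (X ω) : ℝ)) :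
    ∃ M : Submodule ℝ H, IsClosed (M : Set H) ∧
      TopologicalSpace.IsSeparable (M : Set H) ∧
      ∀ y : H, (∀ m ∈ M, (inner ℝ y m : ℝ) = 0) →
        ∀ᵐ ω ∂μ, (inner ℝ y (X ω) : ℝ) = 0 := by
  let K : Set H → Submodule ℝ H := fun s => (span ℝ s).topologicalClosure
  have hK_mono : Monotone K := fun s t hst => topologicalClosure_mono (span_mono hst)
  let Φ : Set H → ℝ≥0∞ := fun s =>
    ∫⁻ ω, ENNReal.ofReal (Real.arctan ‖(K s).starProjection (X ω)‖) ∂μ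
  have hΦ : Monotone Φ := fun s t hst => lintegral_mono fun ω => ENNReal.ofReal_le_ofReal
    (Real.arctan_strictMono.monotone (norm_starProjection_le_of_le (hK_mono hst) _))
  obtain ⟨T, hT, hT_max⟩ := hΦ.exists_isMaxOn_countable
  refine ⟨K T, isClosed_topologicalClosure _, hT.isSeparable.topologicalClosure_span,
    fun y hy => ?_⟩
  by_contra hae
  have hy_mem : y ∈ K (insert y T) := le_topologicalClosure _ (subset_span (Set.mem_insert y T))
  have hlt : Φ T < Φ (insert y T) :=
    lintegral_ofReal_arctan_lt
      (measurable_norm_starProjection hX _ (hT.insert y).isSeparable.topologicalClosure_span)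
      (fun _ => norm_nonneg _)
      (fun _ => norm_starProjection_le_of_le (hK_mono (Set.subset_insert y T)) _)
      (fun h => hae (ae_iff.2 h))
      (fun _ hω => norm_starProjection_lt_of_le (hK_mono (Set.subset_insert y T)) hy_mem
        ((mem_orthogonal' _ _).2 hy) hω)
  exact (hlt.trans_le (hT_max (hT.insert y))).false
end
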